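/- arXiv:0801.3567 — 4 statements merged into one kernel-verified Lean document; each statement's English description precedes it below -/
import Mathlib

section
/- There exists a constant C > 0 such that for all t > 0 and all integers n ≥ 1, μ( { x ∈ [0,1] : κ( ℰ_n(x), μ ) > t + C·n^{−1/4} } ) ≤ D / (n·t²). -/
open MeasureTheory Set Filter Topology

/-- The Kantorovich distance between two probability measures on `[0,1]`
(encoded as measures on `ℝ`): `κ(μ₁,μ₂) = sup {∫ g d(μ₁ - μ₂) : g 1-Lipschitz}`. -/
noncomputable def kantorovichDist (μ₁ μ₂ : MeasureTheory.Measure ℝ) : ℝ :=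
  sSup {r : ℝ | ∃ g : ℝ → ℝ, LipschitzWith 1 g ∧
    r = (∫ ξ, g ξ ∂μ₁) - (∫ ξ, g ξ ∂μ₂)}

/-- The empirical measure `ℰ_n(x) = (1/n) ∑_{j=0}^{n-1} δ_{T^j x}`. -/
noncomputable def empiricalMeasure (T : ℝ → ℝ) (n : ℕ) (x : ℝ) :
    MeasureTheory.Measure ℝ :=
  ((n : ENNReal))⁻¹ • ∑ j ∈ Finset.range n, MeasureTheory.Measure.dirac (T^[j] x)

/-!
The Kantorovich distance `κ(ℰ_n(x), μ)` is a function of the orbit `(x, Tx, …, T^{n-1}x)` that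
is `1/n`-Lipschitz in each coordinate, so the variance inequality and Chebyshev's inequality bound
by `D / (n t²)` the probability that it exceeds its mean by `t`. To bound the mean, approximate a
`1`-Lipschitz `g` on `[0,1]` within `2/m` by its piecewise linear interpolant on the grid of mesh
`1/m`, a combination of `m` ramp functions with coefficients in `[-1,1]`. This bounds `κ` by `4/m`
plus the deviations of the Birkhoff averages of the `m` ramps from their `μ`-integrals, and by
invariance and the variance inequality each deviation has expectation at most `√(D/n)`. Taking
`m ≈ n^{1/4}` balances `4/m` against `m √(D/n)`.
-/

open scoped ENNReal

lemma LipschitzWith.abs_sub_le {g : ℝ → ℝ} (hg : LipschitzWith 1 g) (a b : ℝ) :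
    |g a - g b| ≤ |a - b| := by
  simpa [Real.dist_eq] using hg.dist_le_mul a b

lemma LipschitzWith.abs_mean_sub_mean_le {n : ℕ} {g : ℝ → ℝ} (hg : LipschitzWith 1 g)
    (z w : Fin n → ℝ) :
    |(∑ i, g (z i)) / n - (∑ i, g (w i)) / n| ≤ (∑ i, |z i - w i|) / n := by
  rw [div_sub_div_same, ← Finset.sum_sub_distrib, abs_div, Nat.abs_cast]
  gcongr
  exact (Finset.abs_sum_le_sum_abs _ _).trans (Finset.sum_le_sum fun i _ => hg.abs_sub_le _ _)

lemma ae_abs_le_one_of_ae_mem_Icc {ν : Measure ℝ} (h : ∀ᵐ y ∂ν, y ∈ Icc (0 : ℝ) 1) :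
    ∀ᵐ y ∂ν, |y| ≤ 1 :=
  h.mono fun _ hy => abs_le.2 ⟨by linarith [hy.1], hy.2⟩

section Kantorovich

variable {ν ν₁ ν₂ : Measure ℝ} {g : ℝ → ℝ} {R R₁ R₂ : ℝ}

lemma LipschitzWith.integrable_of_ae_abs_le [IsFiniteMeasure ν] (hg : LipschitzWith 1 g)
    (hν : ∀ᵐ ξ ∂ν, |ξ| ≤ R) : Integrable g ν := by
  refine Integrable.of_bound hg.continuous.aestronglyMeasurable (|g 0| + R) ?_
  filter_upwards [hν] with ξ hξ
  have := hg.abs_sub_le ξ 0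
  rw [sub_zero] at this
  rw [Real.norm_eq_abs]
  linarith [abs_sub_abs_le_abs_sub (g ξ) (g 0)]

lemma LipschitzWith.abs_integral_sub_le [IsProbabilityMeasure ν] (hg : LipschitzWith 1 g)
    (hν : ∀ᵐ ξ ∂ν, |ξ| ≤ R) : |∫ ξ, g ξ ∂ν - g 0| ≤ R := by
  have h := norm_integral_le_of_norm_le_const (μ := ν) (f := fun ξ => g ξ - g 0) (C := R) <| by
    filter_upwards [hν] with ξ hξ
    rw [Real.norm_eq_abs]
    exact (hg.abs_sub_le ξ 0).trans (by rwa [sub_zero])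
  rwa [integral_sub (hg.integrable_of_ae_abs_le hν) (integrable_const _), integral_const,
    probReal_univ, one_smul, Real.norm_eq_abs, mul_one] at h

lemma LipschitzWith.integral_sub_integral_le [IsProbabilityMeasure ν₁] [IsProbabilityMeasure ν₂]
    (hg : LipschitzWith 1 g) (hν₁ : ∀ᵐ ξ ∂ν₁, |ξ| ≤ R₁) (hν₂ : ∀ᵐ ξ ∂ν₂, |ξ| ≤ R₂) :
    ∫ ξ, g ξ ∂ν₁ - ∫ ξ, g ξ ∂ν₂ ≤ R₁ + R₂ := by
  linarith [abs_le.1 (hg.abs_integral_sub_le hν₁), abs_le.1 (hg.abs_integral_sub_le hν₂)]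

lemma kantorovichDist_le {c : ℝ}
    (h : ∀ g : ℝ → ℝ, LipschitzWith 1 g → ∫ ξ, g ξ ∂ν₁ - ∫ ξ, g ξ ∂ν₂ ≤ c) :
    kantorovichDist ν₁ ν₂ ≤ c :=
  csSup_le ⟨0, 0, LipschitzWith.const' 0, by simp⟩ fun _ ⟨g, hg, hr⟩ => hr ▸ h g hg

lemma le_kantorovichDist [IsProbabilityMeasure ν₁] [IsProbabilityMeasure ν₂]
    (hν₁ : ∀ᵐ ξ ∂ν₁, |ξ| ≤ R₁) (hν₂ : ∀ᵐ ξ ∂ν₂, |ξ| ≤ R₂) (hg : LipschitzWith 1 g) :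
    ∫ ξ, g ξ ∂ν₁ - ∫ ξ, g ξ ∂ν₂ ≤ kantorovichDist ν₁ ν₂ :=
  le_csSup ⟨R₁ + R₂, fun _ ⟨_, hg', hr⟩ => hr ▸ hg'.integral_sub_integral_le hν₁ hν₂⟩ ⟨g, hg, rfl⟩

lemma kantorovichDist_nonneg [IsProbabilityMeasure ν₁] [IsProbabilityMeasure ν₂]
    (hν₁ : ∀ᵐ ξ ∂ν₁, |ξ| ≤ R₁) (hν₂ : ∀ᵐ ξ ∂ν₂, |ξ| ≤ R₂) : 0 ≤ kantorovichDist ν₁ ν₂ := by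
  simpa using le_kantorovichDist hν₁ hν₂ (LipschitzWith.const' (0 : ℝ))

lemma kantorovichDist_le_add [IsProbabilityMeasure ν₁] [IsProbabilityMeasure ν₂]
    (hν₁ : ∀ᵐ ξ ∂ν₁, |ξ| ≤ R₁) (hν₂ : ∀ᵐ ξ ∂ν₂, |ξ| ≤ R₂) : kantorovichDist ν₁ ν₂ ≤ R₁ + R₂ :=
  kantorovichDist_le fun _ hg => hg.integral_sub_integral_le hν₁ hν₂

end Kantorovich

section SampleMeasure

variable {n : ℕ}

noncomputable def sampleMeasure (z : Fin n → ℝ) : Measure ℝ :=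
  (n : ℝ≥0∞)⁻¹ • ∑ i, Measure.dirac (z i)

instance [NeZero n] (z : Fin n → ℝ) : IsProbabilityMeasure (sampleMeasure z) :=
  ⟨by simp [sampleMeasure, ENNReal.inv_mul_cancel (NeZero.ne (n : ℝ≥0∞))]⟩

lemma integral_sampleMeasure (z : Fin n → ℝ) (g : ℝ → ℝ) :
    ∫ ξ, g ξ ∂sampleMeasure z = (∑ i, g (z i)) / n := by
  rw [sampleMeasure, integral_smul_measure,
    integral_finsetSum_measure fun i _ => integrable_dirac (by simp)]
  simp [integral_dirac, div_eq_inv_mul]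

lemma ae_sampleMeasure {p : ℝ → Prop} {z : Fin n → ℝ} (h : ∀ i, p (z i)) :
    ∀ᵐ ξ ∂sampleMeasure z, p ξ := by
  rw [ae_iff]
  simp [sampleMeasure, h]

lemma empiricalMeasure_eq_sampleMeasure (T : ℝ → ℝ) (n : ℕ) (x : ℝ) :
    empiricalMeasure T n x = sampleMeasure fun i : Fin n => T^[i] x := by
  rw [empiricalMeasure, sampleMeasure,
    Fin.sum_univ_eq_sum_range (fun j => Measure.dirac (T^[j] x))]

lemma kantorovichDist_sampleMeasure_le [NeZero n] {ν : Measure ℝ} [IsProbabilityMeasure ν]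
    {R : ℝ} (hν : ∀ᵐ ξ ∂ν, |ξ| ≤ R) (z w : Fin n → ℝ) :
    kantorovichDist (sampleMeasure z) ν
      ≤ kantorovichDist (sampleMeasure w) ν + (∑ i, |z i - w i|) / n := by
  refine kantorovichDist_le fun g hg => ?_
  have hw := le_kantorovichDist (ae_sampleMeasure fun i => Finset.single_le_sum
    (f := fun j => |w j|) (fun j _ => abs_nonneg _) (Finset.mem_univ i)) hν hg
  rw [integral_sampleMeasure] at hw ⊢
  linarith [abs_le.1 (hg.abs_mean_sub_mean_le z w)]

lemma abs_kantorovichDist_sampleMeasure_sub_le [NeZero n] {ν : Measure ℝ}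
    [IsProbabilityMeasure ν] {R : ℝ} (hν : ∀ᵐ ξ ∂ν, |ξ| ≤ R) (z w : Fin n → ℝ) :
    |kantorovichDist (sampleMeasure z) ν - kantorovichDist (sampleMeasure w) ν|
      ≤ (∑ i, |z i - w i|) / n := by
  have hzw := kantorovichDist_sampleMeasure_le hν z w
  have hwz := kantorovichDist_sampleMeasure_le hν w z
  simp_rw [abs_sub_comm (w _)] at hwz
  exact abs_sub_le_iff.2 ⟨by linarith, by linarith⟩

end SampleMeasure

section CoordLipschitz

variable {n : ℕ} {K : (Fin n → ℝ) → ℝ}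

def CoordLipschitz (K : (Fin n → ℝ) → ℝ) (L : Fin n → ℝ) : Prop :=
  ∀ (j : Fin n) (z w : Fin n → ℝ), (∀ i, i ≠ j → z i = w i) → |K z - K w| ≤ L j * |z j - w j|

lemma coordLipschitz_of_abs_sub_le_mean (hK : ∀ z w, |K z - K w| ≤ (∑ i, |z i - w i|) / n) :
    CoordLipschitz K fun _ => (n : ℝ)⁻¹ := by
  intro j z w hzw
  have hsum : ∑ i, |z i - w i| = |z j - w j| :=
    Finset.sum_eq_single j (fun i _ hij => by simp [hzw i hij]) (by simp)
  simpa [hsum, div_eq_inv_mul] using hK z w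

lemma lipschitzWith_of_abs_sub_le_mean (hK : ∀ z w, |K z - K w| ≤ (∑ i, |z i - w i|) / n) :
    LipschitzWith 1 K := by
  refine LipschitzWith.of_dist_le_mul fun z w => ?_
  rw [Real.dist_eq, NNReal.coe_one, one_mul]
  refine (hK z w).trans (div_le_of_le_mul₀ (Nat.cast_nonneg n) dist_nonneg ?_)
  calc ∑ i, |z i - w i| ≤ ∑ _i : Fin n, dist z w :=
        Finset.sum_le_sum fun i _ => by simpa [Real.dist_eq] using dist_le_pi_dist z w i
    _ = dist z w * n := by simp [mul_comm]

end CoordLipschitz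

section Grid

variable {m j k : ℕ} {g : ℝ → ℝ} {y : ℝ}

noncomputable def gridRamp (m k : ℕ) (y : ℝ) : ℝ := min (max (y - k / m) 0) (1 / m)

lemma lipschitzWith_gridRamp (m k : ℕ) : LipschitzWith 1 (gridRamp m k) := by
  have h : LipschitzWith 1 fun y : ℝ => y - k / m :=
    LipschitzWith.of_dist_le_mul fun a b => by simp [Real.dist_eq]
  exact (h.max_const 0).min_const (1 / m)

lemma gridRamp_nonneg (m k : ℕ) (y : ℝ) : 0 ≤ gridRamp m k y :=
  le_min (le_max_right _ _) (by positivity)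

lemma gridRamp_le (m k : ℕ) (y : ℝ) : gridRamp m k y ≤ 1 / m := min_le_right _ _

lemma gridRamp_of_le (h : y ≤ k / m) : gridRamp m k y = 0 := by
  rw [gridRamp, max_eq_right (by linarith), min_eq_left (by positivity)]

lemma gridRamp_of_ge (h : (k + 1 : ℝ) / m ≤ y) : gridRamp m k y = 1 / m := by
  have : (0 : ℝ) ≤ 1 / m := by positivity
  rw [add_div] at h
  rw [gridRamp, max_eq_left (by linarith), min_eq_right (by linarith)]

lemma gridRamp_of_mem (h₁ : (k : ℝ) / m ≤ y) (h₂ : y ≤ (k + 1 : ℝ) / m) :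
    gridRamp m k y = y - k / m := by
  rw [add_div] at h₂
  rw [gridRamp, max_eq_left (by linarith), min_eq_left (by linarith)]

noncomputable def gridSlope (m : ℕ) (g : ℝ → ℝ) (k : ℕ) : ℝ := m * (g ((k + 1) / m) - g (k / m))

lemma abs_gridSlope_le (hg : LipschitzWith 1 g) (m k : ℕ) : |gridSlope m g k| ≤ 1 := by
  rcases Nat.eq_zero_or_pos m with rfl | hm
  · simp [gridSlope]
  have hmR : (0 : ℝ) < m := Nat.cast_pos.2 hm
  rw [gridSlope, abs_mul, Nat.abs_cast, ← le_div_iff₀' hmR]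
  simpa [← sub_div, abs_of_pos hmR] using hg.abs_sub_le ((k + 1) / m) (k / m)

/-- The piecewise linear interpolation of `g` on the grid `{k / m}`. -/
noncomputable def gridInterpolant (m : ℕ) (g : ℝ → ℝ) (y : ℝ) : ℝ :=
  g 0 + ∑ k ∈ Finset.range m, gridSlope m g k * gridRamp m k y

lemma gridInterpolant_of_mem (hj : j < m) (h₁ : (j : ℝ) / m ≤ y) (h₂ : y ≤ (j + 1 : ℝ) / m) :
    gridInterpolant m g y = g (j / m) + gridSlope m g j * (y - j / m) := by
  have hm : (m : ℝ) ≠ 0 := by norm_cast; omega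
  have below : ∀ k ∈ Finset.range j, gridSlope m g k * gridRamp m k y
      = g ((k + 1 : ℕ) / m) - g (k / m) := fun k hk => by
    have hkj : ((k + 1 : ℕ) : ℝ) ≤ j := by exact_mod_cast Finset.mem_range.1 hk
    rw [gridRamp_of_ge (h₁.trans' (by gcongr; exact_mod_cast hkj)), gridSlope]
    push_cast
    field_simp
  have above : ∀ k ∈ Finset.Ico (j + 1) m, gridSlope m g k * gridRamp m k y = 0 := fun k hk => by
    have hjk : (j + 1 : ℝ) ≤ k := by exact_mod_cast (Finset.mem_Ico.1 hk).1
    rw [gridRamp_of_le (h₂.trans (by gcongr)), mul_zero]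
  rw [gridInterpolant, ← Finset.sum_range_add_sum_Ico _ hj, Finset.sum_range_succ,
    Finset.sum_congr rfl below, Finset.sum_range_sub (fun k => g (k / m)),
    Finset.sum_eq_zero above, gridRamp_of_mem h₁ h₂, Nat.cast_zero, zero_div]
  ring

lemma exists_gridCell (hm : m ≠ 0) (hy : y ∈ Icc (0 : ℝ) 1) :
    ∃ j < m, (j : ℝ) / m ≤ y ∧ y ≤ (j + 1 : ℝ) / m := by
  have hmR : (0 : ℝ) < m := by positivity
  rcases eq_or_lt_of_le hy.2 with rfl | hy1
  · exact ⟨m - 1, by omega, by rw [div_le_one hmR]; simp, by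
      rw [Nat.cast_sub (by omega), Nat.cast_one, sub_add_cancel, div_self hmR.ne']⟩
  refine ⟨⌊y * m⌋₊, ?_, ?_, ?_⟩
  · exact (Nat.floor_lt (mul_nonneg hy.1 hmR.le)).2 (by nlinarith)
  · rw [div_le_iff₀ hmR]; exact Nat.floor_le (by nlinarith [hy.1])
  · rw [le_div_iff₀ hmR]; exact (Nat.lt_floor_add_one _).le

lemma abs_sub_gridInterpolant_le (hg : LipschitzWith 1 g) (hm : m ≠ 0)
    (hy : y ∈ Icc (0 : ℝ) 1) : |g y - gridInterpolant m g y| ≤ 2 / m := by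
  obtain ⟨j, hj, h₁, h₂⟩ := exists_gridCell hm hy
  have hcell : |y - j / m| ≤ 1 / m := by
    rw [add_div] at h₂
    exact abs_le.2 ⟨by linarith [(by positivity : (0 : ℝ) ≤ 1 / m)], by linarith⟩
  have hslope : |gridSlope m g j * (y - j / m)| ≤ 1 / m := by
    rw [abs_mul]
    exact (mul_le_of_le_one_left (abs_nonneg _) (abs_gridSlope_le hg m j)).trans hcell
  rw [gridInterpolant_of_mem hj h₁ h₂, ← sub_sub]
  calc |g y - g (j / m) - gridSlope m g j * (y - j / m)|
      ≤ |g y - g (j / m)| + |gridSlope m g j * (y - j / m)| := abs_sub _ _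
    _ ≤ 1 / m + 1 / m := add_le_add ((hg.abs_sub_le _ _).trans hcell) hslope
    _ = 2 / m := by ring

end Grid

section GridBound

variable {ν ν₁ ν₂ : Measure ℝ} {g : ℝ → ℝ} {m : ℕ}

lemma integrable_gridRamp [IsFiniteMeasure ν] (m k : ℕ) : Integrable (gridRamp m k) ν :=
  Integrable.of_bound (lipschitzWith_gridRamp m k).continuous.aestronglyMeasurable (1 / m)
    (ae_of_all _ fun y => by
      rw [Real.norm_eq_abs, abs_of_nonneg (gridRamp_nonneg m k y)]; exact gridRamp_le m k y)

lemma integral_gridInterpolant [IsProbabilityMeasure ν] (m : ℕ) (g : ℝ → ℝ) :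
    ∫ y, gridInterpolant m g y ∂ν
      = g 0 + ∑ k ∈ Finset.range m, gridSlope m g k * ∫ y, gridRamp m k y ∂ν := by
  have hint : ∀ k ∈ Finset.range m, Integrable (fun y => gridSlope m g k * gridRamp m k y) ν :=
    fun k _ => (integrable_gridRamp m k).const_mul _
  simp only [gridInterpolant]
  rw [integral_add (integrable_const _) (integrable_finsetSum _ hint),
    integral_finsetSum _ hint, integral_const, probReal_univ, one_smul]
  simp_rw [integral_const_mul]

lemma LipschitzWith.abs_integral_sub_integral_gridInterpolant_le [IsProbabilityMeasure ν]
    (hg : LipschitzWith 1 g) (hm : m ≠ 0) (hν : ∀ᵐ y ∂ν, y ∈ Icc (0 : ℝ) 1) :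
    |∫ y, g y ∂ν - ∫ y, gridInterpolant m g y ∂ν| ≤ 2 / m := by
  have hint : Integrable (gridInterpolant m g) ν :=
    (integrable_const _).add (integrable_finsetSum _ fun k _ =>
      (integrable_gridRamp m k).const_mul _)
  rw [← integral_sub (hg.integrable_of_ae_abs_le (ae_abs_le_one_of_ae_mem_Icc hν)) hint,
    ← Real.norm_eq_abs]
  simpa using norm_integral_le_of_norm_le_const (μ := ν)
      (f := fun y => g y - gridInterpolant m g y) (C := 2 / m) <| by
    filter_upwards [hν] with y hy
    exact abs_sub_gridInterpolant_le hg hm hy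

lemma LipschitzWith.integral_sub_integral_le_grid
    [IsProbabilityMeasure ν₁] [IsProbabilityMeasure ν₂] (hg : LipschitzWith 1 g) (hm : m ≠ 0)
    (hν₁ : ∀ᵐ y ∂ν₁, y ∈ Icc (0 : ℝ) 1) (hν₂ : ∀ᵐ y ∂ν₂, y ∈ Icc (0 : ℝ) 1) :
    ∫ y, g y ∂ν₁ - ∫ y, g y ∂ν₂ ≤ 4 / m
      + ∑ k ∈ Finset.range m, |∫ y, gridRamp m k y ∂ν₁ - ∫ y, gridRamp m k y ∂ν₂| := by
  obtain ⟨-, h₁⟩ := abs_le.1 (hg.abs_integral_sub_integral_gridInterpolant_le hm hν₁)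
  obtain ⟨h₂, -⟩ := abs_le.1 (hg.abs_integral_sub_integral_gridInterpolant_le hm hν₂)
  have hinterp : ∫ y, gridInterpolant m g y ∂ν₁ - ∫ y, gridInterpolant m g y ∂ν₂
      ≤ ∑ k ∈ Finset.range m, |∫ y, gridRamp m k y ∂ν₁ - ∫ y, gridRamp m k y ∂ν₂| := by
    rw [integral_gridInterpolant, integral_gridInterpolant, add_sub_add_left_eq_sub,
      ← Finset.sum_sub_distrib]
    refine Finset.sum_le_sum fun k _ => ?_
    rw [← mul_sub]
    exact (le_abs_self _).trans ((abs_mul _ _).trans_le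
      (mul_le_of_le_one_left (abs_nonneg _) (abs_gridSlope_le hg m k)))
  linarith [show (4 : ℝ) / m = 2 / m + 2 / m by ring]

lemma kantorovichDist_le_grid [IsProbabilityMeasure ν₁] [IsProbabilityMeasure ν₂] (hm : m ≠ 0)
    (hν₁ : ∀ᵐ y ∂ν₁, y ∈ Icc (0 : ℝ) 1) (hν₂ : ∀ᵐ y ∂ν₂, y ∈ Icc (0 : ℝ) 1) :
    kantorovichDist ν₁ ν₂ ≤ 4 / m
      + ∑ k ∈ Finset.range m, |∫ y, gridRamp m k y ∂ν₁ - ∫ y, gridRamp m k y ∂ν₂| :=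
  kantorovichDist_le fun _ hg => hg.integral_sub_integral_le_grid hm hν₁ hν₂

end GridBound

section Probability

variable {α : Type*} [MeasurableSpace α] {μ : Measure α}

lemma integral_abs_le_sqrt_integral_sq [IsProbabilityMeasure μ] {u : α → ℝ} (hu : MemLp u 2 μ) :
    ∫ x, |u x| ∂μ ≤ √(∫ x, u x ^ 2 ∂μ) := by
  refine Real.le_sqrt_of_sq_le ?_
  have h := ProbabilityTheory.variance_nonneg |u| μ
  rw [ProbabilityTheory.variance_eq_sub hu.abs] at h
  simpa [sq_abs] using h

lemma meas_ge_le_of_integral_sq_le [IsFiniteMeasure μ] {f : α → ℝ} (hf : MemLp f 2 μ)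
    {t V : ℝ} (ht : 0 < t) (hV : ∫ x, (f x - ∫ y, f y ∂μ) ^ 2 ∂μ ≤ V) :
    μ {x | t ≤ |f x - ∫ y, f y ∂μ|} ≤ ENNReal.ofReal (V / t ^ 2) := by
  refine (ProbabilityTheory.meas_ge_le_variance_div_sq hf ht).trans (ENNReal.ofReal_le_ofReal ?_)
  rw [ProbabilityTheory.variance_eq_integral hf.aemeasurable]
  gcongr

variable {T : α → α}

lemma MeasureTheory.MeasurePreserving.ae_iterate_mem (hT : MeasurePreserving T μ μ) {s : Set α}
    (hs : ∀ᵐ y ∂μ, y ∈ s) (n : ℕ) : ∀ᵐ x ∂μ, ∀ i : Fin n, T^[i] x ∈ s :=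
  ae_all_iff.2 fun i => (hT.iterate i).quasiMeasurePreserving.ae hs

lemma MeasureTheory.MeasurePreserving.integral_mean_comp_iterate (hT : MeasurePreserving T μ μ)
    {φ : α → ℝ} (hφ : Integrable φ μ) (n : ℕ) [NeZero n] :
    ∫ x, (∑ i : Fin n, φ (T^[i] x)) / n ∂μ = ∫ x, φ x ∂μ := by
  have hcomp : ∀ i : ℕ, ∫ x, φ (T^[i] x) ∂μ = ∫ x, φ x ∂μ := fun i => by
    have hmap := (hT.iterate i).map_eq
    rw [← integral_map (hT.iterate i).measurable.aemeasurable
      (by rw [hmap]; exact hφ.aestronglyMeasurable), hmap]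
  rw [integral_div, integral_finsetSum (f := fun (i : Fin n) x => φ (T^[i] x)) _ fun i _ =>
    (hT.iterate i).integrable_comp_of_integrable hφ]
  simp [hcomp, NeZero.ne]

lemma memLp_mean_orbit [IsFiniteMeasure μ] (hT : Measurable T) {φ : α → ℝ} (hφ : Measurable φ)
    {c : ℝ} (hφc : ∀ y, |φ y| ≤ c) (n : ℕ) [NeZero n] (p : ℝ≥0∞) :
    MemLp (fun x => (∑ i : Fin n, φ (T^[i] x)) / n) p μ := by
  have hmeas : Measurable fun x => ∑ i : Fin n, φ (T^[i] x) :=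
    Finset.measurable_fun_sum (f := fun (i : Fin n) x => φ (T^[i] x)) _
      fun i _ => hφ.comp (hT.iterate i)
  refine MemLp.of_bound (hmeas.div_const _).aestronglyMeasurable c (ae_of_all _ fun x => ?_)
  rw [Real.norm_eq_abs, abs_div, Nat.abs_cast, div_le_iff₀ (by simp [Nat.pos_of_neZero n])]
  calc |∑ i : Fin n, φ (T^[i] x)| ≤ ∑ _i : Fin n, c :=
        (Finset.abs_sum_le_sum_abs _ _).trans (Finset.sum_le_sum fun i _ => hφc _)
    _ = c * n := by simp [mul_comm]

end Probability

section Orbit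

variable {μ : Measure ℝ} [IsProbabilityMeasure μ] {T : ℝ → ℝ} {n : ℕ} [NeZero n] {V : ℝ}

lemma integral_abs_mean_orbit_sub_le (hT : MeasurePreserving T μ μ) {φ : ℝ → ℝ}
    (hφ : LipschitzWith 1 φ) {c : ℝ} (hφc : ∀ y, |φ y| ≤ c)
    (hvar : ∀ K : (Fin n → ℝ) → ℝ, CoordLipschitz K (fun _ => (n : ℝ)⁻¹) →
      ∫ x, (K (fun i => T^[i] x) - ∫ y, K (fun i => T^[i] y) ∂μ) ^ 2 ∂μ ≤ V) :
    ∫ x, |(∑ i : Fin n, φ (T^[i] x)) / n - ∫ y, φ y ∂μ| ∂μ ≤ √V := by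
  set A : ℝ → ℝ := fun x => (∑ i : Fin n, φ (T^[i] x)) / n
  have hA : MemLp A 2 μ := memLp_mean_orbit hT.measurable hφ.continuous.measurable hφc n 2
  have hmean : ∫ x, A x ∂μ = ∫ y, φ y ∂μ := hT.integral_mean_comp_iterate
    (Integrable.of_bound hφ.continuous.aestronglyMeasurable c (ae_of_all _ hφc)) n
  calc ∫ x, |A x - ∫ y, φ y ∂μ| ∂μ = ∫ x, |A x - ∫ y, A y ∂μ| ∂μ := by rw [hmean]
    _ ≤ √(∫ x, (A x - ∫ y, A y ∂μ) ^ 2 ∂μ) :=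
        integral_abs_le_sqrt_integral_sq (hA.sub (memLp_const _))
    _ ≤ √V := Real.sqrt_le_sqrt <|
        hvar _ (coordLipschitz_of_abs_sub_le_mean hφ.abs_mean_sub_mean_le)

lemma memLp_kantorovichDist_orbit (hμ : ∀ᵐ y ∂μ, y ∈ Icc (0 : ℝ) 1)
    (hT : MeasurePreserving T μ μ) (p : ℝ≥0∞) :
    MemLp (fun x => kantorovichDist (sampleMeasure fun i : Fin n => T^[i] x) μ) p μ := by
  have hμ' := ae_abs_le_one_of_ae_mem_Icc hμ
  have hK := lipschitzWith_of_abs_sub_le_mean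
    (abs_kantorovichDist_sampleMeasure_sub_le (n := n) hμ')
  refine MemLp.of_bound (hK.continuous.measurable.comp (measurable_pi_lambda _ fun i =>
    hT.measurable.iterate i)).aestronglyMeasurable (1 + 1) ?_
  filter_upwards [hT.ae_iterate_mem hμ n] with x hx
  have hsample := ae_abs_le_one_of_ae_mem_Icc (ae_sampleMeasure hx)
  rw [Real.norm_eq_abs, abs_of_nonneg (kantorovichDist_nonneg hsample hμ')]
  exact kantorovichDist_le_add hsample hμ'

lemma integral_kantorovichDist_orbit_le (hμ : ∀ᵐ y ∂μ, y ∈ Icc (0 : ℝ) 1)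
    (hT : MeasurePreserving T μ μ)
    (hvar : ∀ K : (Fin n → ℝ) → ℝ, CoordLipschitz K (fun _ => (n : ℝ)⁻¹) →
      ∫ x, (K (fun i => T^[i] x) - ∫ y, K (fun i => T^[i] y) ∂μ) ^ 2 ∂μ ≤ V)
    {m : ℕ} (hm : m ≠ 0) :
    ∫ x, kantorovichDist (sampleMeasure fun i : Fin n => T^[i] x) μ ∂μ ≤ 4 / m + m * √V := by
  set Δ : ℕ → ℝ → ℝ := fun k x =>
    |(∑ i : Fin n, gridRamp m k (T^[i] x)) / n - ∫ y, gridRamp m k y ∂μ|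
  have hramp : ∀ k y, |gridRamp m k y| ≤ 1 / m := fun k y => by
    rw [abs_of_nonneg (gridRamp_nonneg m k y)]
    exact gridRamp_le m k y
  have hΔ : ∀ k, Integrable (Δ k) μ := fun k =>
    ((memLp_mean_orbit hT.measurable (lipschitzWith_gridRamp m k).continuous.measurable (hramp k) n
      1).integrable le_rfl |>.sub (integrable_const _)).abs
  have hgrid : ∀ᵐ x ∂μ, kantorovichDist (sampleMeasure fun i : Fin n => T^[i] x) μ
      ≤ 4 / m + ∑ k ∈ Finset.range m, Δ k x := by
    filter_upwards [hT.ae_iterate_mem hμ n] with x hx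
    simpa only [integral_sampleMeasure] using kantorovichDist_le_grid hm (ae_sampleMeasure hx) hμ
  calc _ ≤ ∫ x, (4 / m + ∑ k ∈ Finset.range m, Δ k x) ∂μ :=
        integral_mono_ae ((memLp_kantorovichDist_orbit hμ hT 1).integrable le_rfl)
          ((integrable_const _).add (integrable_finsetSum _ fun k _ => hΔ k)) hgrid
    _ = 4 / m + ∑ k ∈ Finset.range m, ∫ x, Δ k x ∂μ := by
        rw [integral_add (integrable_const _) (integrable_finsetSum _ fun k _ => hΔ k),
          integral_finsetSum _ fun k _ => hΔ k, integral_const, probReal_univ, one_smul]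
    _ ≤ 4 / m + ∑ _k ∈ Finset.range m, √V := by
        gcongr with k
        exact integral_abs_mean_orbit_sub_le hT (lipschitzWith_gridRamp m k) (hramp k) hvar
    _ = 4 / m + m * √V := by simp

end Orbit

lemma exists_gridSize_le (D : ℝ) {n : ℕ} (hn : 1 ≤ n) :
    ∃ m : ℕ, m ≠ 0 ∧ 4 / m + m * √(D / n) ≤ (4 + 2 * √D) / (n : ℝ) ^ ((1 : ℝ) / 4) := by
  set β := (n : ℝ) ^ ((1 : ℝ) / 4)
  have hβ : 1 ≤ β := Real.one_le_rpow (by exact_mod_cast hn) (by norm_num)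
  have hββ : √n = β * β := by
    rw [← Real.rpow_add (by positivity), Real.sqrt_eq_rpow]
    norm_num
  have hm₁ : β ≤ ⌈β⌉₊ := Nat.le_ceil β
  have hm₂ : (⌈β⌉₊ : ℝ) ≤ 2 * β := by linarith [Nat.ceil_lt_add_one (by linarith : 0 ≤ β)]
  refine ⟨⌈β⌉₊, (Nat.ceil_pos.2 (by linarith)).ne', ?_⟩
  have h₁ : 4 / (⌈β⌉₊ : ℝ) ≤ 4 / β := by gcongr
  have h₂ : (⌈β⌉₊ : ℝ) * (√D / (β * β)) ≤ 2 * √D / β :=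
    calc _ ≤ 2 * β * (√D / (β * β)) := by gcongr
      _ = 2 * √D / β := by field_simp
  rw [Real.sqrt_div' D (Nat.cast_nonneg n), hββ, add_div]
  linarith

theorem empirical_measure_speed_intermittent_map_general
    (T : ℝ → ℝ)
    (h : ℝ → ℝ)
    (μ : Measure ℝ) (hprob : IsProbabilityMeasure μ)
    (hμ : μ = (volume.restrict (Icc (0:ℝ) 1)).withDensity (fun x => ENNReal.ofReal (h x)))
    (hinv : MeasurePreserving T μ μ)
    -- variance (Devroye) inequality
    (D : ℝ)
    (hvar : ∀ n : ℕ, 1 ≤ n → ∀ (K : (Fin n → ℝ) → ℝ) (L : Fin n → ℝ),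
      (∀ (j : Fin n) (z zz : Fin n → ℝ), (∀ i, i ≠ j → z i = zz i) →
        |K z - K zz| ≤ L j * |z j - zz j|) →
      ∫ x, (K (fun i => T^[(i:ℕ)] x) - ∫ y, K (fun i => T^[(i:ℕ)] y) ∂μ) ^ 2 ∂μ
        ≤ D * ∑ j, (L j) ^ 2) :
    ∃ C > (0:ℝ), ∀ t : ℝ, 0 < t → ∀ n : ℕ, 1 ≤ n →
      μ {x | x ∈ Icc (0:ℝ) 1 ∧
          kantorovichDist (empiricalMeasure T n x) μ > t + C / (n : ℝ) ^ ((1:ℝ)/4)}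
        ≤ ENNReal.ofReal (D / (n * t ^ 2)) := by
  have hsupp : ∀ᵐ ξ ∂μ, ξ ∈ Icc (0:ℝ) 1 :=
    hμ ▸ (withDensity_absolutelyContinuous _ _).ae_le (ae_restrict_mem measurableSet_Icc)
  refine ⟨4 + 2 * √D, by positivity, fun t ht n hn => ?_⟩
  have : NeZero n := ⟨by omega⟩
  have hvar_n : ∀ K : (Fin n → ℝ) → ℝ, CoordLipschitz K (fun _ => (n : ℝ)⁻¹) →
      ∫ x, (K (fun i => T^[i] x) - ∫ y, K (fun i => T^[i] y) ∂μ) ^ 2 ∂μ ≤ D / n :=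
    fun K hK => (hvar n hn K _ hK).trans_eq <| by
      simp only [inv_pow, Finset.sum_const, Finset.card_univ, Fintype.card_fin, nsmul_eq_mul]
      field_simp
  obtain ⟨m, hm, hmn⟩ := exists_gridSize_le D hn
  have hmean := (integral_kantorovichDist_orbit_le hsupp hinv hvar_n hm).trans hmn
  have hcheb := meas_ge_le_of_integral_sq_le (memLp_kantorovichDist_orbit hsupp hinv 2) ht
    (hvar_n _ (coordLipschitz_of_abs_sub_le_mean
      (abs_kantorovichDist_sampleMeasure_sub_le (ae_abs_le_one_of_ae_mem_Icc hsupp))))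
  rw [← div_div]
  refine (measure_mono fun x hx => ?_).trans hcheb
  obtain ⟨-, hx⟩ := hx
  rw [empiricalMeasure_eq_sampleMeasure] at hx
  show t ≤ |_|
  exact le_abs.2 (Or.inl (by linarith))

/-- **Speed of convergence of the empirical measure** in Kantorovich distance
for the intermittent interval map: there is `C > 0` such that for all `t > 0`
and `n ≥ 1`, `μ{x : κ(ℰ_n(x),μ) > t + C n^{-1/4}} ≤ D/(n t²)`. -/
theorem empirical_measure_speed_intermittent_map
    (α : ℝ) (hα0 : 0 < α) (hα1 : α < 4 - Real.sqrt 15)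
    (T : ℝ → ℝ) (hT_maps : MapsTo T (Icc (0:ℝ) 1) (Icc (0:ℝ) 1))
    (hT_formula : ∀ x ∈ Ico (0:ℝ) (1/2), T x = x + (2:ℝ) ^ α * x ^ (1 + α))
    (T' : ℝ → ℝ)
    (hT_deriv : ∀ x ∈ Icc (1/2:ℝ) 1, HasDerivWithinAt T (T' x) (Icc (1/2:ℝ) 1) x)
    (hT_C2 : ContDiffOn ℝ 2 T (Icc (1/2:ℝ) 1))
    (hT_bij : BijOn T (Icc (1/2:ℝ) 1) (Icc (0:ℝ) 1))
    (hT_expanding : ∀ x ∈ Icc (1/2:ℝ) 1, 1 < |T' x|)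
    (h : ℝ → ℝ) (c₁ c₂ : ℝ) (hc₁ : 0 < c₁) (hc₁₂ : c₁ ≤ c₂)
    (hdens : ∀ x ∈ Ioc (0:ℝ) 1, c₁ * x ^ (-α) ≤ h x ∧ h x ≤ c₂ * x ^ (-α))
    (μ : Measure ℝ) (hprob : IsProbabilityMeasure μ)
    (hμ : μ = (volume.restrict (Icc (0:ℝ) 1)).withDensity (fun x => ENNReal.ofReal (h x)))
    (hinv : MeasurePreserving T μ μ)
    -- variance (Devroye) inequality
    (D : ℝ) (hD : 0 < D)
    (hvar : ∀ n : ℕ, 1 ≤ n → ∀ (K : (Fin n → ℝ) → ℝ) (L : Fin n → ℝ),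
      (∀ (j : Fin n) (z zz : Fin n → ℝ), (∀ i, i ≠ j → z i = zz i) →
        |K z - K zz| ≤ L j * |z j - zz j|) →
      ∫ x, (K (fun i => T^[(i:ℕ)] x) - ∫ y, K (fun i => T^[(i:ℕ)] y) ∂μ) ^ 2 ∂μ
        ≤ D * ∑ j, (L j) ^ 2) :
    ∃ C > (0:ℝ), ∀ t : ℝ, 0 < t → ∀ n : ℕ, 1 ≤ n →
      μ {x | x ∈ Icc (0:ℝ) 1 ∧
          kantorovichDist (empiricalMeasure T n x) μ > t + C / (n : ℝ) ^ ((1:ℝ)/4)}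
        ≤ ENNReal.ofReal (D / (n * t ^ 2)) :=
  empirical_measure_speed_intermittent_map_general T h μ hprob hμ hinv D hvar
end

section
/- For every measurable set A ⊆ [0,1] with μ(A) > 0, every integer n ≥ 1 and every t > 0, μ( { x ∈ [0,1] : 𝒵_A(x) ≥ n^{−1/3}·( t + 2^{4/3}·D^{1/3}/μ(A) ) } ) ≤ D / (n^{1/3}·t²). -/
open MeasureTheory Set

/-!
The shadowing distance `F x = inf_{y ∈ A} ∑_{j < n} |T^j x - T^j y|` is the `ℓ¹`-distance
from the orbit segment of `x` to those of the points of `A`, hence `1`-Lipschitz in each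
coordinate, and the variance inequality gives `Var (φ ∘ F) ≤ D n Lip(φ)²` for every Lipschitz `φ`.
For the ramp `φ = max 0 (1 - · / b)`, which is `1` on `A` and `0` on `{F ≥ b}`, Chebyshev's
inequality bounds `μ {F ≥ b}` by `D n / (b μ(A))²`. As `F ≤ n` on `[0, 1]`, this bounds the mean,
`∫ F ≤ b + n μ {F ≥ b}`, and `b = 2^{1/3} D^{1/3} n^{2/3} / μ(A)` gives
`∫ F ≤ 2^{4/3} D^{1/3} n^{2/3} / μ(A)`. Chebyshev's inequality for `F` itself concludes.
-/

open ProbabilityTheory Metric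
open scoped NNReal

section LipschitzVariance

variable {X : Type*} [MeasurableSpace X] {μ : Measure X} {F Φ : X → ℝ} {A : Set X}
  {M V b c : ℝ}

lemma memLp_of_nonneg_of_le [IsFiniteMeasure μ] {p : ENNReal} (hF : Measurable F)
    (hF0 : ∀ x, 0 ≤ F x) (hFM : ∀ x, F x ≤ M) : MemLp F p μ :=
  .of_bound hF.aestronglyMeasurable M (.of_forall fun x => by
    simpa [abs_of_nonneg (hF0 x)] using hFM x)

lemma integral_le_add_mul_measureReal_le [IsProbabilityMeasure μ] (hF : Measurable F)
    (hF0 : ∀ x, 0 ≤ F x) (hFM : ∀ x, F x ≤ M) (hb : 0 ≤ b) :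
    ∫ x, F x ∂μ ≤ b + M * μ.real {x | b ≤ F x} := by
  set S := {x | b ≤ F x}
  have hS : MeasurableSet S := measurableSet_le measurable_const hF
  have hind : Integrable (fun x => M * S.indicator (fun _ => (1 : ℝ)) x) μ :=
    ((integrable_const 1).indicator hS).const_mul M
  have hbound : ∀ x, F x ≤ b + M * S.indicator (fun _ => 1) x := by
    intro x
    by_cases hx : x ∈ S
    · simp only [indicator_of_mem hx]
      linarith [hFM x]
    · simp only [indicator_of_notMem hx, mul_zero, add_zero]
      exact (not_le.1 hx).le
  calc ∫ x, F x ∂μ ≤ ∫ x, (b + M * S.indicator (fun _ => 1) x) ∂μ :=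
        integral_mono ((memLp_of_nonneg_of_le hF hF0 hFM).integrable le_rfl)
          ((integrable_const b).add hind) hbound
    _ = b + M * μ.real S := by
        rw [integral_add (integrable_const b) hind, integral_const_mul,
          integral_indicator_const _ hS]
        simp

lemma measure_setOf_eq_zero_le_variance [IsFiniteMeasure μ] (hΦ : Measurable Φ)
    (hΦ0 : ∀ x, 0 ≤ Φ x) (hΦ1 : ∀ x, Φ x ≤ 1) (hA : MeasurableSet A) (hA0 : 0 < μ A)
    (hΦA : ∀ x ∈ A, Φ x = 1) :
    μ {x | Φ x = 0} ≤ ENNReal.ofReal (variance Φ μ / μ.real A ^ 2) := by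
  have hΦL2 : MemLp Φ 2 μ := memLp_of_nonneg_of_le hΦ hΦ0 hΦ1
  have hmean : μ.real A ≤ ∫ x, Φ x ∂μ :=
    calc μ.real A = ∫ x in A, Φ x ∂μ := by
          rw [setIntegral_congr_fun hA hΦA, setIntegral_const, smul_eq_mul, mul_one]
      _ ≤ ∫ x, Φ x ∂μ :=
          setIntegral_le_integral (hΦL2.integrable one_le_two) (.of_forall hΦ0)
  refine (measure_mono fun x (hx : Φ x = 0) => ?_).trans
    (meas_ge_le_variance_div_sq hΦL2
      (ENNReal.toReal_pos hA0.ne' (measure_ne_top μ A)))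
  show μ.real A ≤ |Φ x - ∫ x, Φ x ∂μ|
  rw [hx, zero_sub, abs_neg]
  exact hmean.trans (le_abs_self _)

lemma lipschitzWith_max_zero_one_sub_div (hb : 0 < b) :
    LipschitzWith (Real.toNNReal b⁻¹) (fun s => max 0 (1 - s / b)) := by
  refine LipschitzWith.const_max (LipschitzWith.of_dist_le_mul fun s r => ?_) 0
  rw [Real.coe_toNNReal _ (inv_nonneg.2 hb.le), Real.dist_eq, Real.dist_eq,
    show 1 - s / b - (1 - r / b) = b⁻¹ * (r - s) by ring, abs_mul, abs_of_pos (inv_pos.2 hb),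
    abs_sub_comm]

lemma integral_le_of_lipschitz_variance [IsProbabilityMeasure μ] (hF : Measurable F)
    (hF0 : ∀ x, 0 ≤ F x) (hFM : ∀ x, F x ≤ M)
    (hA : MeasurableSet A) (hA0 : 0 < μ A) (hFA : ∀ x ∈ A, F x = 0)
    (hvar : ∀ (φ : ℝ → ℝ) (L : ℝ≥0), LipschitzWith L φ → variance (φ ∘ F) μ ≤ V * L ^ 2)
    (hc : 0 < c) (hcMV : 2 * M * V ≤ c ^ 3) :
    ∫ x, F x ∂μ ≤ 2 * c / μ.real A := by
  set a := μ.real A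
  have ha : 0 < a := ENNReal.toReal_pos hA0.ne' (measure_ne_top μ A)
  have ha1 : a ≤ 1 := measureReal_le_one
  have hM : 0 ≤ M := by
    obtain ⟨x, -⟩ := nonempty_of_measure_ne_zero hA0.ne'
    exact (hF0 x).trans (hFM x)
  set b := c / a
  have hb : 0 < b := div_pos hc ha
  have htail : μ.real {x | b ≤ F x} ≤ V / c ^ 2 := by
    have hV : 0 ≤ V := by simpa using (variance_nonneg (id ∘ F) μ).trans (hvar id 1 .id)
    have hramp := hvar _ _ (lipschitzWith_max_zero_one_sub_div hb)
    rw [Real.coe_toNNReal _ (inv_nonneg.2 hb.le)] at hramp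
    refine ENNReal.toReal_le_of_le_ofReal (by positivity) ?_
    calc μ {x | b ≤ F x} ≤ μ {x | max 0 (1 - F x / b) = 0} :=
          measure_mono fun x (hx : b ≤ F x) => max_eq_left (by
            rw [sub_nonpos, one_le_div hb]; exact hx)
      _ ≤ ENNReal.ofReal (variance (fun x => max 0 (1 - F x / b)) μ / a ^ 2) :=
          measure_setOf_eq_zero_le_variance (by fun_prop) (fun x => le_max_left _ _)
            (fun x => max_le zero_le_one (by linarith [div_nonneg (hF0 x) hb.le])) hA hA0
            (fun x hx => by simp [hFA x hx])
      _ ≤ ENNReal.ofReal (V / c ^ 2) := by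
          refine ENNReal.ofReal_le_ofReal
            ((div_le_div_of_nonneg_right hramp (sq_nonneg a)).trans_eq ?_)
          simp only [b]
          field_simp
  calc ∫ x, F x ∂μ ≤ b + M * μ.real {x | b ≤ F x} :=
        integral_le_add_mul_measureReal_le hF hF0 hFM hb.le
    _ ≤ c / a + M * (V / c ^ 2) := by gcongr
    _ ≤ c / a + c / 2 := by
        gcongr
        rw [mul_div_assoc', div_le_div_iff₀ (by positivity) two_pos]
        nlinarith
    _ ≤ 2 * c / a := by
        have : c / 2 ≤ c / a := div_le_div_of_nonneg_left hc.le ha (by linarith)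
        rw [mul_div_assoc]
        linarith

theorem measure_le_of_lipschitz_variance [IsProbabilityMeasure μ] (hF : Measurable F)
    (hF0 : ∀ x, 0 ≤ F x) (hFM : ∀ x, F x ≤ M) (hA : MeasurableSet A) (hA0 : 0 < μ A)
    (hFA : ∀ x ∈ A, F x = 0)
    (hvar : ∀ (φ : ℝ → ℝ) (L : ℝ≥0), LipschitzWith L φ → variance (φ ∘ F) μ ≤ V * L ^ 2)
    (hc : 0 < c) (hcMV : 2 * M * V ≤ c ^ 3) {s : ℝ} (hs : 0 < s) :
    μ {x | s + 2 * c / μ.real A ≤ F x} ≤ ENNReal.ofReal (V / s ^ 2) := by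
  have hmean := integral_le_of_lipschitz_variance hF hF0 hFM hA hA0 hFA hvar hc hcMV
  have hFvar : variance F μ ≤ V := by simpa using hvar id 1 .id
  refine (measure_mono fun x (hx : s + 2 * c / μ.real A ≤ F x) => ?_).trans
    ((meas_ge_le_variance_div_sq (memLp_of_nonneg_of_le hF hF0 hFM) hs).trans
      (ENNReal.ofReal_le_ofReal (div_le_div_of_nonneg_right hFvar (sq_nonneg s))))
  show s ≤ |F x - ∫ x, F x ∂μ|
  exact le_abs.2 (.inl (by linarith))

end LipschitzVariance

section Shadowing

lemma PiLp.dist_toLp_one_of_eq_off {ι : Type*} [Fintype ι] {β : ι → Type*}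
    [∀ i, SeminormedAddCommGroup (β i)] {z w : ∀ i, β i} {j : ι} (h : ∀ i, i ≠ j → z i = w i) :
    dist (WithLp.toLp 1 z) (WithLp.toLp 1 w) = dist (z j) (w j) := by
  rw [PiLp.dist_eq_of_L1]
  exact Finset.sum_eq_single j (fun i _ hi => by simp [h i hi]) (by simp)

variable {E : Type*} [SeminormedAddCommGroup E]

def orbitSegment (T : E → E) (n : ℕ) (x : E) : PiLp 1 (fun _ : Fin n => E) :=
  WithLp.toLp 1 fun i => T^[i] x

noncomputable def shadowingDist (T : E → E) (A : Set E) (n : ℕ) (z : Fin n → E) : ℝ :=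
  infDist (WithLp.toLp 1 z) (orbitSegment T n '' A)

variable {T : E → E} {A : Set E} {n : ℕ}

lemma continuous_shadowingDist : Continuous (shadowingDist T A n) :=
  (lipschitz_infDist_pt _).continuous.comp (PiLp.continuous_toLp 1 _)

lemma abs_shadowingDist_sub_le {z w : Fin n → E} {j : Fin n} (h : ∀ i, i ≠ j → z i = w i) :
    |shadowingDist T A n z - shadowingDist T A n w| ≤ dist (z j) (w j) := by
  rw [← Real.dist_eq, ← PiLp.dist_toLp_one_of_eq_off h]
  simpa [shadowingDist] using (lipschitz_infDist_pt (orbitSegment T n '' A)).dist_le_mul _ _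

lemma shadowingDist_orbit_eq_zero {y : E} (hy : y ∈ A) :
    shadowingDist T A n (fun i => T^[i] y) = 0 :=
  infDist_zero_of_mem (mem_image_of_mem _ hy)

end Shadowing

section IntervalMap

variable {T : ℝ → ℝ} {A : Set ℝ} {n : ℕ}

lemma shadowingDist_orbit_eq_sInf (x : ℝ) :
    shadowingDist T A n (fun i => T^[i] x)
      = sInf {r : ℝ | ∃ y ∈ A, r = ∑ j ∈ Finset.range n, |T^[j] x - T^[j] y|} := by
  have hset : (dist (WithLp.toLp 1 fun i : Fin n => T^[i] x) ·) '' (orbitSegment T n '' A)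
      = {r : ℝ | ∃ y ∈ A, r = ∑ j ∈ Finset.range n, |T^[j] x - T^[j] y|} := by
    ext r
    simp [orbitSegment, PiLp.dist_eq_of_L1, Real.dist_eq, Finset.sum_range, eq_comm]
  rcases A.eq_empty_or_nonempty with rfl | hA
  · simp [shadowingDist]
  rw [← hset]
  exact ((isGLB_infDist (hA.image _)).csInf_eq ((hA.image _).image _)).symm

lemma shadowingDist_orbit_le (hT : MapsTo T (Icc 0 1) (Icc 0 1)) (hA : A ⊆ Icc 0 1)
    (hAne : A.Nonempty) {x : ℝ} (hx : x ∈ Icc 0 1) :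
    shadowingDist T A n (fun i => T^[i] x) ≤ n := by
  obtain ⟨y, hy⟩ := hAne
  calc shadowingDist T A n (fun i => T^[i] x)
      ≤ dist (orbitSegment T n x) (orbitSegment T n y) :=
        infDist_le_dist_of_mem (mem_image_of_mem _ hy)
    _ ≤ ∑ _i : Fin n, (1 : ℝ) := by
        rw [PiLp.dist_eq_of_L1]
        exact Finset.sum_le_sum fun i _ =>
          Real.dist_le_of_mem_Icc_01 (hT.iterate i hx) (hT.iterate i (hA hy))
    _ = n := by simp

def OrbitVarianceInequality (T : ℝ → ℝ) (μ : Measure ℝ) (D : ℝ) (n : ℕ) : Prop :=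
  ∀ (K : (Fin n → ℝ) → ℝ) (L : Fin n → ℝ),
    (∀ (j : Fin n) (z zz : Fin n → ℝ), (∀ i, i ≠ j → z i = zz i) →
      |K z - K zz| ≤ L j * |z j - zz j|) →
    ∫ x, (K (fun i => T^[(i:ℕ)] x) - ∫ y, K (fun i => T^[(i:ℕ)] y) ∂μ) ^ 2 ∂μ
      ≤ D * ∑ j, (L j) ^ 2

lemma OrbitVarianceInequality.variance_comp_shadowingDist_le {μ : Measure ℝ} {D : ℝ}
    (h : OrbitVarianceInequality T μ D n) (hT : Measurable T) {φ : ℝ → ℝ} {L : ℝ≥0}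
    (hφ : LipschitzWith L φ) :
    variance (fun x => φ (shadowingDist T A n (fun i => T^[i] x))) μ ≤ D * n * L ^ 2 := by
  have hmeas : Measurable fun x => φ (shadowingDist T A n (fun i => T^[i] x)) :=
    (hφ.continuous.comp continuous_shadowingDist).measurable.comp
      (measurable_pi_lambda _ fun i => hT.iterate i)
  rw [variance_eq_integral hmeas.aemeasurable]
  have hlip : ∀ (j : Fin n) (z zz : Fin n → ℝ), (∀ i, i ≠ j → z i = zz i) →
      |φ (shadowingDist T A n z) - φ (shadowingDist T A n zz)| ≤ L * |z j - zz j| :=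
    fun j z zz hz => by
      simpa [Real.dist_eq] using (hφ.dist_le_mul _ _).trans
        (mul_le_mul_of_nonneg_left (abs_shadowingDist_sub_le hz) L.2)
  simpa [mul_assoc] using h (φ ∘ shadowingDist T A n) (fun _ => L) hlip

lemma OrbitVarianceInequality.measure_shadowingDist_ge_le {μ : Measure ℝ}
    [IsProbabilityMeasure μ] {D c s : ℝ} (h : OrbitVarianceInequality T μ D n)
    (hT : Measurable T) (hT_maps : MapsTo T (Icc 0 1) (Icc 0 1)) (hA : A ⊆ Icc 0 1)
    (hAm : MeasurableSet A) (hA0 : 0 < μ A) (hc : 0 < c) (hcD : 2 * n * (D * n) ≤ c ^ 3)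
    (hs : 0 < s) :
    μ {x | x ∈ Icc 0 1 ∧ s + 2 * c / μ.real A ≤ shadowingDist T A n (fun i => T^[i] x)}
      ≤ ENNReal.ofReal (D * n / s ^ 2) := by
  have hAne : A.Nonempty := nonempty_of_measure_ne_zero hA0.ne'
  -- truncating at `n` changes nothing on `[0, 1]` but makes the function bounded
  set G : ℝ → ℝ := fun x => min (shadowingDist T A n (fun i => T^[i] x)) n
  have hG_var (φ : ℝ → ℝ) (L : ℝ≥0) (hφ : LipschitzWith L φ) :
      variance (φ ∘ G) μ ≤ D * n * L ^ 2 :=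
    h.variance_comp_shadowingDist_le (φ := φ ∘ fun r => min r n) hT
      (by simpa using hφ.comp (LipschitzWith.id.min_const (n : ℝ)))
  refine (measure_mono fun x hx => ?_).trans
    (measure_le_of_lipschitz_variance (F := G) ?_ (fun x => le_min infDist_nonneg n.cast_nonneg)
      (fun x => min_le_right _ _) hAm hA0 (fun y hy => ?_) hG_var hc hcD hs)
  · obtain ⟨hx01, hxF⟩ := hx
    show _ ≤ G x
    rwa [show G x = _ from min_eq_left (shadowingDist_orbit_le hT_maps hA hAne hx01)]
  · exact (continuous_shadowingDist.min continuous_const).measurable.comp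
      (measurable_pi_lambda _ fun i => hT.iterate i)
  · simp [G, shadowingDist_orbit_eq_zero hy]

end IntervalMap

lemma rpow_one_third_pow_three {x : ℝ} (hx : 0 ≤ x) : (x ^ ((1 : ℝ) / 3)) ^ 3 = x := by
  rw [show (1 : ℝ) / 3 = ((3 : ℕ) : ℝ)⁻¹ by norm_num]
  exact Real.rpow_inv_natCast_pow hx three_ne_zero

theorem shadowing_intermittent_map_general
    (T : ℝ → ℝ) (hT_maps : MapsTo T (Icc (0:ℝ) 1) (Icc (0:ℝ) 1))
    (μ : Measure ℝ) (hprob : IsProbabilityMeasure μ)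
    (hinv : MeasurePreserving T μ μ)
    -- variance (Devroye) inequality
    (D : ℝ) (hD : 0 < D)
    (hvar : ∀ n : ℕ, 1 ≤ n → ∀ (K : (Fin n → ℝ) → ℝ) (L : Fin n → ℝ),
      (∀ (j : Fin n) (z zz : Fin n → ℝ), (∀ i, i ≠ j → z i = zz i) →
        |K z - K zz| ≤ L j * |z j - zz j|) →
      ∫ x, (K (fun i => T^[(i:ℕ)] x) - ∫ y, K (fun i => T^[(i:ℕ)] y) ∂μ) ^ 2 ∂μ
        ≤ D * ∑ j, (L j) ^ 2) :
    ∀ A : Set ℝ, A ⊆ Icc (0:ℝ) 1 → MeasurableSet A → 0 < μ A →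
    ∀ n : ℕ, 1 ≤ n → ∀ t : ℝ, 0 < t →
      μ {x | x ∈ Icc (0:ℝ) 1 ∧
          (1 / (n : ℝ)) *
            sInf {r : ℝ | ∃ y ∈ A, r = ∑ j ∈ Finset.range n, |T^[j] x - T^[j] y|}
          ≥ (1 / (n : ℝ) ^ ((1:ℝ)/3)) *
              (t + (2:ℝ) ^ ((4:ℝ)/3) * D ^ ((1:ℝ)/3) / (μ A).toReal)}
        ≤ ENNReal.ofReal (D / ((n : ℝ) ^ ((1:ℝ)/3) * t ^ 2)) := by
  intro A hA hAm hAμ n hn t ht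
  have hν : 0 < (n : ℝ) ^ ((1 : ℝ) / 3) := by positivity
  have hδ : 0 < D ^ ((1 : ℝ) / 3) := by positivity
  have he : 0 < (2 : ℝ) ^ ((1 : ℝ) / 3) := by positivity
  have hν3 := rpow_one_third_pow_three (n.cast_nonneg (α := ℝ))
  have hδ3 := rpow_one_third_pow_three hD.le
  have he3 := rpow_one_third_pow_three (zero_le_two (α := ℝ))
  rw [show (4 : ℝ) / 3 = 1 + 1 / 3 by norm_num, Real.rpow_add two_pos, Real.rpow_one]
  generalize (n : ℝ) ^ ((1 : ℝ) / 3) = ν at *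
  generalize D ^ ((1 : ℝ) / 3) = δ at *
  generalize (2 : ℝ) ^ ((1 : ℝ) / 3) = e at *
  have key := (show OrbitVarianceInequality T μ D n from hvar n hn).measure_shadowingDist_ge_le
    (c := e * δ * ν ^ 2) (s := ν ^ 2 * t) hinv.measurable hT_maps hA hAm hAμ (by positivity)
    (le_of_eq (by rw [← hν3, ← hδ3, ← he3]; ring)) (by positivity)
  refine (measure_mono fun x hx => ?_).trans (key.trans_eq ?_)
  · obtain ⟨hx01, hxF⟩ := hx
    refine ⟨hx01, ?_⟩
    rw [← shadowingDist_orbit_eq_sInf, ← hν3] at hxF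
    rw [ge_iff_le, ← div_le_iff₀' (by positivity)] at hxF
    refine le_of_eq_of_le ?_ hxF
    rw [Measure.real_def]
    field_simp
  · rw [← hν3]
    congr 1
    field_simp

/-- **Average shadowing estimate** for the intermittent interval map: for every
measurable `A ⊆ [0,1]` with `μ(A) > 0`, every `n ≥ 1` and every `t > 0`,
`μ{x : 𝒵_A(x) ≥ n^{-1/3}(t + 2^{4/3} D^{1/3}/μ(A))} ≤ D/(n^{1/3} t²)`, where
`𝒵_A(x) = (1/n) inf_{y ∈ A} ∑_{j=0}^{n-1} |T^j x - T^j y|`. -/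
theorem shadowing_intermittent_map
    (α : ℝ) (hα0 : 0 < α) (hα1 : α < 4 - Real.sqrt 15)
    (T : ℝ → ℝ) (hT_maps : MapsTo T (Icc (0:ℝ) 1) (Icc (0:ℝ) 1))
    (hT_formula : ∀ x ∈ Ico (0:ℝ) (1/2), T x = x + (2:ℝ) ^ α * x ^ (1 + α))
    (T' : ℝ → ℝ)
    (hT_deriv : ∀ x ∈ Icc (1/2:ℝ) 1, HasDerivWithinAt T (T' x) (Icc (1/2:ℝ) 1) x)
    (hT_C2 : ContDiffOn ℝ 2 T (Icc (1/2:ℝ) 1))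
    (hT_bij : BijOn T (Icc (1/2:ℝ) 1) (Icc (0:ℝ) 1))
    (hT_expanding : ∀ x ∈ Icc (1/2:ℝ) 1, 1 < |T' x|)
    (h : ℝ → ℝ) (c₁ c₂ : ℝ) (hc₁ : 0 < c₁) (hc₁₂ : c₁ ≤ c₂)
    (hdens : ∀ x ∈ Ioc (0:ℝ) 1, c₁ * x ^ (-α) ≤ h x ∧ h x ≤ c₂ * x ^ (-α))
    (μ : Measure ℝ) (hprob : IsProbabilityMeasure μ)
    (hμ : μ = (volume.restrict (Icc (0:ℝ) 1)).withDensity (fun x => ENNReal.ofReal (h x)))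
    (hinv : MeasurePreserving T μ μ)
    -- variance (Devroye) inequality
    (D : ℝ) (hD : 0 < D)
    (hvar : ∀ n : ℕ, 1 ≤ n → ∀ (K : (Fin n → ℝ) → ℝ) (L : Fin n → ℝ),
      (∀ (j : Fin n) (z zz : Fin n → ℝ), (∀ i, i ≠ j → z i = zz i) →
        |K z - K zz| ≤ L j * |z j - zz j|) →
      ∫ x, (K (fun i => T^[(i:ℕ)] x) - ∫ y, K (fun i => T^[(i:ℕ)] y) ∂μ) ^ 2 ∂μ
        ≤ D * ∑ j, (L j) ^ 2) :
    ∀ A : Set ℝ, A ⊆ Icc (0:ℝ) 1 → MeasurableSet A → 0 < μ A →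
    ∀ n : ℕ, 1 ≤ n → ∀ t : ℝ, 0 < t →
      μ {x | x ∈ Icc (0:ℝ) 1 ∧
          (1 / (n : ℝ)) *
            sInf {r : ℝ | ∃ y ∈ A, r = ∑ j ∈ Finset.range n, |T^[j] x - T^[j] y|}
          ≥ (1 / (n : ℝ) ^ ((1:ℝ)/3)) *
              (t + (2:ℝ) ^ ((4:ℝ)/3) * D ^ ((1:ℝ)/3) / (μ A).toReal)}
        ≤ ENNReal.ofReal (D / ((n : ℝ) ^ ((1:ℝ)/3) * t ^ 2)) :=
  shadowing_intermittent_map_general T hT_maps μ hprob hinv D hD hvar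
end

section
/- There exists a constant C > 0 such that for every integer m ≥ 1 and every pair of points z, z̃ ∈ (0,1] with the property that for every 0 ≤ j ≤ m the points T^j z and T^j z̃ belong to the same atom of the Markov partition, one has |z − z̃| / z ≤ C · |T^m z − T^m z̃| / T^m z. -/
open Set

/-- **Backward shadowing estimate** (Lemma `ineq1`): there is `C > 0` such
that for every `m ≥ 1` and all `z, z̃ ∈ (0,1]` whose iterates `T^j z, T^j z̃`
lie in the same atom of the Markov partition for `0 ≤ j ≤ m`,
`|z - z̃|/z ≤ C |T^m z - T^m z̃| / T^m z`. -/
theorem relative_shadowing_intermittent_map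
    (α : ℝ) (hα0 : 0 < α) (hα1 : α < 1)
    (T : ℝ → ℝ) (hT_maps : MapsTo T (Icc (0:ℝ) 1) (Icc (0:ℝ) 1))
    (hT_formula : ∀ x ∈ Ico (0:ℝ) (1/2), T x = x + (2:ℝ) ^ α * x ^ (1 + α))
    (T' : ℝ → ℝ)
    (hT_deriv : ∀ x ∈ Icc (0:ℝ) 1, x ≠ 1/2 → HasDerivAt T (T' x) x)
    (hT_C2 : ContDiffOn ℝ 2 T (Icc (1/2:ℝ) 1))
    (hT_bij : BijOn T (Icc (1/2:ℝ) 1) (Icc (0:ℝ) 1))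
    (hT_expanding : ∀ x ∈ Icc (1/2:ℝ) 1, 1 < |T' x|)
    -- Markov partition points x_ℓ and atoms I_ℓ = (x_{ℓ+1}, x_ℓ]
    (xpt : ℕ → ℝ) (hx0 : xpt 0 = 1) (hx1 : xpt 1 = 1/2)
    (hxpos : ∀ ℓ, 0 < xpt ℓ) (hxdec : ∀ ℓ, xpt (ℓ + 1) < xpt ℓ)
    (hxpre : ∀ ℓ, 2 ≤ ℓ → xpt ℓ ∈ Ioo (0:ℝ) (1/2) ∧ T (xpt ℓ) = xpt (ℓ - 1)) :
    ∃ C > (0:ℝ), ∀ m : ℕ, 1 ≤ m → ∀ z ∈ Ioc (0:ℝ) 1, ∀ zt ∈ Ioc (0:ℝ) 1,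
      (∀ j ≤ m, ∃ ℓ : ℕ, T^[j] z ∈ Ioc (xpt (ℓ + 1)) (xpt ℓ) ∧
        T^[j] zt ∈ Ioc (xpt (ℓ + 1)) (xpt ℓ)) →
      |z - zt| / z ≤ C * (|T^[m] z - T^[m] zt| / T^[m] z) := by
  have h2pos : (0:ℝ) < 2 := by norm_num
  have h2a : (0:ℝ) < (2:ℝ)^α := Real.rpow_pos_of_pos h2pos α
  -- basic facts about xpt
  have hxle1 : ∀ k, xpt k ≤ 1 := by
    intro k
    induction k with
    | zero => rw [hx0]
    | succ n ih => exact le_trans (hxdec n).le ih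
  have hxhalf' : ∀ n, xpt (n+1) ≤ 1/2 := by
    intro n
    induction n with
    | zero => rw [hx1]
    | succ n ih => exact le_trans (hxdec (n+1)).le ih
  have hxhalf : ∀ k, 1 ≤ k → xpt k ≤ 1/2 := by
    intro k hk
    cases k with
    | zero => omega
    | succ n => exact hxhalf' n
  have hF : ∀ x : ℝ, 0 < x → x ^ (1+α) = x * x ^ α := by
    intro x hx
    rw [Real.rpow_add hx, Real.rpow_one]
  -- xpt k ≤ 2 * xpt (k+1) for k ≥ 1
  have hxdouble : ∀ k, 1 ≤ k → xpt k ≤ 2 * xpt (k+1) := by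
    intro k hk
    obtain ⟨⟨hp0, hp2⟩, hTp⟩ := hxpre (k+1) (by omega)
    have hfor := hT_formula (xpt (k+1)) ⟨hp0.le, hp2⟩
    have hkk : k + 1 - 1 = k := by omega
    rw [hkk] at hTp
    have h1 : (2:ℝ)^α * (xpt (k+1))^α ≤ 1 := by
      rw [← Real.mul_rpow (by norm_num) hp0.le]
      exact Real.rpow_le_one (by positivity) (by linarith) hα0.le
    have h2 := hF _ hp0
    have h3 : (0:ℝ) < (xpt (k+1))^α := Real.rpow_pos_of_pos hp0 α
    nlinarith [hTp, hfor]
  -- T(1/2) is 0 or 1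
  have hthalf_mem : (1/2 : ℝ) ∈ Icc (1/2:ℝ) 1 := by norm_num
  have hThalf : T (1/2) = 0 ∨ T (1/2) = 1 := by
    by_contra hcon
    push_neg at hcon
    obtain ⟨h0, h1⟩ := hcon
    obtain ⟨a, ha, hTa⟩ := hT_bij.2.2 (show (0:ℝ) ∈ Icc (0:ℝ) 1 by norm_num)
    obtain ⟨b, hb, hTb⟩ := hT_bij.2.2 (show (1:ℝ) ∈ Icc (0:ℝ) 1 by norm_num)
    have hane : a ≠ 1/2 := fun h => h0 (h ▸ hTa)
    have hbne : b ≠ 1/2 := fun h => h1 (h ▸ hTb)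
    have hagt : 1/2 < a := lt_of_le_of_ne ha.1 (Ne.symm hane)
    have hbgt : 1/2 < b := lt_of_le_of_ne hb.1 (Ne.symm hbne)
    have hsub : uIcc a b ⊆ Icc (1/2:ℝ) 1 := by
      rw [uIcc]
      exact Icc_subset_Icc (le_inf hagt.le hbgt.le) (sup_le ha.2 hb.2)
    have hacont : ContinuousOn T (uIcc a b) := (hT_C2.continuousOn).mono hsub
    have hmem : T (1/2) ∈ uIcc (T a) (T b) := by
      rw [hTa, hTb, uIcc_of_le (by norm_num : (0:ℝ) ≤ 1)]
      exact hT_bij.1 hthalf_mem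
    obtain ⟨c, hc, hTc⟩ := intermediate_value_uIcc hacont hmem
    have hcgt : 1/2 < c := by
      rcases Set.mem_uIcc.1 hc with ⟨h₁, _⟩ | ⟨h₁, _⟩
      · linarith
      · linarith
    have := hT_bij.2.1 (hsub hc) hthalf_mem hTc
    exact (ne_of_gt hcgt) this
  -- value of the formula at 1/2
  have hFhalf : (1/2:ℝ) + (2:ℝ)^α * (1/2:ℝ)^(1+α) = 1 := by
    have hh : (2:ℝ)^α * (1/2:ℝ)^(1+α) = 1/2 := by
      rw [show (1/2:ℝ) = 2⁻¹ by norm_num,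
          Real.inv_rpow (by norm_num : (0:ℝ) ≤ 2), ← Real.rpow_neg (by norm_num : (0:ℝ) ≤ 2),
          ← Real.rpow_add h2pos]
      rw [show α + -(1+α) = -1 by ring]
      rw [Real.rpow_neg_one]
    linarith
  -- monotonicity estimate for the left branch formula
  have hFmono : ∀ a b : ℝ, 0 < b → b ≤ a → a ≤ 1/2 →
      (a - b) * (1 + (2:ℝ)^α * b^α) ≤ (a + (2:ℝ)^α*a^(1+α)) - (b + (2:ℝ)^α*b^(1+α)) := by
    intro a b hb hba ha
    have hpa : (0:ℝ) < a := lt_of_lt_of_le hb hba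
    rw [hF a hpa, hF b hb]
    have h1 : b^α ≤ a^α := Real.rpow_le_rpow hb.le hba hα0.le
    have h3 : (0:ℝ) < b^α := Real.rpow_pos_of_pos hb α
    nlinarith [mul_le_mul_of_nonneg_left h1 hpa.le]
  -- the key one-step estimate
  have key : ∀ (l1 l2 : ℕ) (a b : ℝ), b ≤ a →
      a ∈ Ioc (xpt (l1+1)) (xpt l1) → b ∈ Ioc (xpt (l1+1)) (xpt l1) →
      T a ∈ Ioc (xpt (l2+1)) (xpt l2) → T b ∈ Ioc (xpt (l2+1)) (xpt l2) →
      |a - b| / min (min a b) (1/2) ≤ |T a - T b| / min (min (T a) (T b)) (1/2) := by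
    intro l1 l2 a b hba haI hbI haI' hbI'
    have hb0 : 0 < b := lt_trans (hxpos _) hbI.1
    have ha0 : 0 < a := lt_of_lt_of_le hb0 hba
    have hTa0 : 0 < T a := lt_trans (hxpos _) haI'.1
    have hTb0 : 0 < T b := lt_trans (hxpos _) hbI'.1
    have hdenom' : (0:ℝ) < min (min (T a) (T b)) (1/2) :=
      lt_min (lt_min hTa0 hTb0) (by norm_num)
    have hdenom : (0:ℝ) < min (min a b) (1/2) :=
      lt_min (lt_min ha0 hb0) (by norm_num)
    rcases eq_or_lt_of_le hba with heq | hlt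
    · rw [heq]
      simp only [sub_self, abs_zero, zero_div]
      positivity
    rcases Nat.eq_zero_or_pos l1 with h0 | hpos1
    · -- right branch: a, b ∈ (1/2, 1]
      subst h0
      have hb2 : 1/2 < b := by
        have := hbI.1; rw [hx1] at this; exact this
      have ha1 : a ≤ 1 := by
        have := haI.2; rw [hx0] at this; exact this
      have hcont : ContinuousOn T (Icc b a) :=
        hT_C2.continuousOn.mono (Icc_subset_Icc hb2.le ha1)
      have hderiv : ∀ x ∈ Ioo b a, HasDerivAt T (T' x) x := by
        intro x hx
        exact hT_deriv x ⟨by linarith [hx.1], by linarith [hx.2]⟩ (by linarith [hx.1])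
      obtain ⟨c, hc, hslope⟩ := exists_hasDerivAt_eq_slope T T' hlt hcont hderiv
      have hexp := hT_expanding c ⟨by linarith [hc.1], by linarith [hc.2]⟩
      have hTeq : T a - T b = T' c * (a - b) := by
        rw [hslope, div_mul_eq_mul_div, mul_div_assoc,
          div_self (ne_of_gt (sub_pos.2 hlt)), mul_one]
      have habs : a - b ≤ |T a - T b| := by
        calc a - b = 1 * (a-b) := by ring
        _ ≤ |T' c| * (a - b) := by
            apply mul_le_mul_of_nonneg_right hexp.le (by linarith)
        _ = |T' c * (a-b)| := by
            rw [abs_mul, abs_of_nonneg (by linarith : (0:ℝ) ≤ a - b)]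
        _ = |T a - T b| := by rw [← hTeq]
      have hmin1 : min (min a b) (1/2) = (1/2:ℝ) := by
        apply min_eq_right
        apply le_min <;> linarith
      rw [hmin1, abs_of_nonneg (by linarith : (0:ℝ) ≤ a - b)]
      have hd2 : min (min (T a) (T b)) (1/2) ≤ (1/2:ℝ) := min_le_right _ _
      calc (a - b)/(1/2:ℝ) ≤ |T a - T b| / (1/2:ℝ) := by gcongr
      _ ≤ |T a - T b| / min (min (T a) (T b)) (1/2) := by
          apply div_le_div_of_nonneg_left (abs_nonneg _) hdenom' hd2
    · -- left branch: a, b ∈ (0, 1/2], use the formula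
      have hxl : xpt l1 ≤ 1/2 := hxhalf l1 hpos1
      have ha2 : a ≤ 1/2 := le_trans haI.2 hxl
      have hb2 : b < 1/2 := lt_of_lt_of_le hlt ha2
      have hTbf : T b = b + (2:ℝ)^α * b^(1+α) := hT_formula b ⟨hb0.le, hb2⟩
      have hTaf : T a = a + (2:ℝ)^α * a^(1+α) := by
        rcases lt_or_eq_of_le ha2 with h | h
        · exact hT_formula a ⟨ha0.le, h⟩
        · rcases hThalf with h' | h'
          · exfalso
            rw [h, h'] at hTa0
            norm_num at hTa0
          · rw [h, h']
            exact hFhalf.symm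
      have hkey := hFmono a b hb0 hba ha2
      rw [← hTaf, ← hTbf] at hkey
      have hba' : (0:ℝ) < b^α := Real.rpow_pos_of_pos hb0 α
      have hTba : T b ≤ T a := by
        have hp : (0:ℝ) < (a - b) * (1 + (2:ℝ)^α * b^α) :=
          mul_pos (by linarith) (by positivity)
        linarith
      have hTbval : T b = b * (1 + (2:ℝ)^α * b^α) := by
        rw [hTbf, hF b hb0]; ring
      have hminL : min (min a b) (1/2) = b := by
        rw [min_eq_right hba]
        exact min_eq_left hb2.le
      have hminR : min (min (T a) (T b)) (1/2) = min (T b) (1/2) := by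
        rw [min_eq_right hTba]
      rw [hminL, hminR, abs_of_nonneg (by linarith : (0:ℝ) ≤ a - b),
        abs_of_nonneg (by linarith : (0:ℝ) ≤ T a - T b)]
      rw [div_le_div_iff₀ hb0 (lt_min hTb0 (by norm_num))]
      have hmle : min (T b) (1/2:ℝ) ≤ T b := min_le_left _ _
      calc (a-b) * min (T b) (1/2:ℝ) ≤ (a-b) * T b := by
            apply mul_le_mul_of_nonneg_left hmle (by linarith)
      _ = (a-b) * (1 + (2:ℝ)^α*b^α) * b := by rw [hTbval]; ring
      _ ≤ (T a - T b) * b := by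
            apply mul_le_mul_of_nonneg_right hkey hb0.le
  -- main argument
  refine ⟨2, by norm_num, ?_⟩
  intro m hm z hz zt hzt hit
  set Ψ : ℕ → ℝ := fun j =>
    |T^[j] z - T^[j] zt| / min (min (T^[j] z) (T^[j] zt)) (1/2) with hΨ
  have step : ∀ j, j + 1 ≤ m → Ψ j ≤ Ψ (j+1) := by
    intro j hj
    obtain ⟨l1, hu1, hv1⟩ := hit j (by omega)
    obtain ⟨l2, hu2, hv2⟩ := hit (j+1) hj
    rw [Function.iterate_succ_apply' T j z] at hu2
    rw [Function.iterate_succ_apply' T j zt] at hv2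
    simp only [hΨ]
    rw [Function.iterate_succ_apply' T j z, Function.iterate_succ_apply' T j zt]
    rcases le_total (T^[j] zt) (T^[j] z) with h | h
    · exact key l1 l2 (T^[j] z) (T^[j] zt) h hu1 hv1 hu2 hv2
    · have := key l1 l2 (T^[j] zt) (T^[j] z) h hv1 hu1 hv2 hu2
      rw [abs_sub_comm (T^[j] zt) (T^[j] z), min_comm (T^[j] zt) (T^[j] z),
        abs_sub_comm (T (T^[j] zt)) (T (T^[j] z)),
        min_comm (T (T^[j] zt)) (T (T^[j] z))] at this
      exact this
  have chain : Ψ 0 ≤ Ψ m := by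
    have main : ∀ j, j ≤ m → Ψ 0 ≤ Ψ j := by
      intro j hj
      induction j with
      | zero => exact le_refl _
      | succ n ih => exact le_trans (ih (by omega)) (step n hj)
    exact main m le_rfl
  -- endpoints
  have h1 : |z - zt| / z ≤ Ψ 0 := by
    simp only [hΨ, Function.iterate_zero_apply]
    have hden0 : (0:ℝ) < min (min z zt) (1/2) :=
      lt_min (lt_min hz.1 hzt.1) (by norm_num)
    have hle : min (min z zt) (1/2) ≤ z :=
      le_trans (min_le_left _ _) (le_trans (min_le_left _ _) le_rfl)
    exact div_le_div_of_nonneg_left (abs_nonneg _) hden0 hle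
  obtain ⟨lm, hum, hvm⟩ := hit m le_rfl
  have humpos : 0 < T^[m] z := lt_trans (hxpos _) hum.1
  have hvmpos : 0 < T^[m] zt := lt_trans (hxpos _) hvm.1
  have hden : T^[m] z / 2 ≤ min (min (T^[m] z) (T^[m] zt)) (1/2) := by
    rcases Nat.eq_zero_or_pos lm with h0 | hp
    · subst h0
      have hu1 : T^[m] z ≤ 1 := by have := hum.2; rw [hx0] at this; exact this
      have hv2 : 1/2 < T^[m] zt := by have := hvm.1; rw [hx1] at this; exact this
      refine le_min (le_min (by linarith) (by linarith)) (by linarith)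
    · have hd := hxdouble lm hp
      have hu2 : T^[m] z ≤ xpt lm := hum.2
      have hug : xpt (lm+1) < T^[m] z := hum.1
      have hvg : xpt (lm+1) < T^[m] zt := hvm.1
      have hxl : xpt lm ≤ 1/2 := hxhalf lm hp
      refine le_min (le_min (by linarith) (by linarith)) (by linarith)
  have h2 : Ψ m ≤ 2 * (|T^[m] z - T^[m] zt| / T^[m] z) := by
    simp only [hΨ]
    have hpos2 : (0:ℝ) < T^[m] z / 2 := by linarith
    calc |T^[m] z - T^[m] zt| / min (min (T^[m] z) (T^[m] zt)) (1/2)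
        ≤ |T^[m] z - T^[m] zt| / (T^[m] z / 2) :=
          div_le_div_of_nonneg_left (abs_nonneg _) hpos2 hden
    _ = 2 * (|T^[m] z - T^[m] zt| / T^[m] z) := by
          rw [div_div_eq_mul_div]
          ring
  linarith
end

section
/- There exists a constant C₀ > 0, independent of m and z, such that for every integer m ≥ 1 and every z ∈ (0,1] at which the derivative of T^m exists, |(T^m)'(z)| ≥ C₀ · ( T^m z / z )^{1+α}. -/
/-!
A Lyapunov-function argument. With the potential `φ(t) = max (t ^ α) (log (2t) + 2 ^ (-α))`
and `F(t) = (t · e^{-φ(t)}) ^ (1 + α)`, one has `F(T x) ≤ |T'(x)| F(x)` away from `1/2`: on the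
right branch because `F` is maximal and constant on `[1/2, 1]` while `|T'| ≥ 1`; on the left
branch by an explicit inequality in `u = (2x) ^ α`. Multiplying along the orbit gives
`F(T^m z) ≤ |(T^m)'(z)| F(z)`, and `e^{-4} t^{1+α} ≤ F(t) ≤ t^{1+α}` on `(0, 1]`.
An orbit with `T^m z ≠ 0` can pass through the discontinuity `1/2` only at its last step,
`T^{m-1} z = 1/2 ↦ 1`; there `F(1) = F(1/2)`, and since `T` does not contract distances from
`1/2`, `|(T^m)'(z)| ≥ |(T^{m-1})'(z)|`.
-/

open Set Filter Topology Real

theorem antitoneOn_rpow_sub_log {α : ℝ} (hα : α ≤ 1) :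
    AntitoneOn (fun t : ℝ => t ^ α - log t) (Ioc 0 1) := by
  have hderiv : ∀ t : ℝ, 0 < t →
      HasDerivAt (fun t : ℝ => t ^ α - log t) (α * t ^ (α - 1) - t⁻¹) t := fun t ht =>
    (hasDerivAt_rpow_const (Or.inl ht.ne')).sub (hasDerivAt_log ht.ne')
  refine antitoneOn_of_hasDerivWithinAt_nonpos (convex_Ioc 0 1)
    (fun t ht => (hderiv t ht.1).continuousAt.continuousWithinAt)
    (fun t ht => (hderiv t (by rw [interior_Ioc] at ht; exact ht.1)).hasDerivWithinAt)
    (fun t ht => ?_)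
  rw [interior_Ioc] at ht
  have hαt : α * t ^ α ≤ 1 := by
    rcases le_total α 0 with h | h
    · nlinarith [rpow_pos_of_pos ht.1 α]
    · nlinarith [rpow_le_one ht.1.le ht.2.le h, rpow_nonneg ht.1.le α]
  rw [rpow_sub_one ht.1.ne', sub_nonpos, ← mul_div_assoc, inv_eq_one_div]
  exact div_le_div_of_nonneg_right hαt ht.1.le

theorem mul_mul_rpow_le_rpow_sub_one_mul {α v : ℝ} (hα0 : 0 ≤ α) (hα1 : α ≤ 1) (hv : -1 < v) :
    α * v * (1 + v) ^ α ≤ ((1 + v) ^ α - 1) * (1 + v) := by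
  have h1 : 0 < 1 + v := by linarith
  have hbern : (1 + v) ^ (1 - α) ≤ 1 + (1 - α) * v :=
    rpow_one_add_le_one_add_mul_self hv.le (by linarith) (by linarith)
  have hsplit : (1 + v) ^ (1 - α) * (1 + v) ^ α = 1 + v := by
    rw [← rpow_add h1]; simp
  nlinarith [rpow_nonneg h1.le α]

theorem one_add_mul_log_one_add_le {α u : ℝ} (hα0 : 0 ≤ α) (hα1 : α ≤ 1) (hu : 0 ≤ u) :
    (1 + α) * log (1 + u) ≤
      log (1 + (1 + α) * u) + (1 + α) / 2 * (u * ((1 + u) ^ α - 1)) := by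
  set G : ℝ → ℝ := fun v =>
    log (1 + (1 + α) * v) + (1 + α) / 2 * (v * ((1 + v) ^ α - 1)) - (1 + α) * log (1 + v)
  set G' : ℝ → ℝ := fun v => (1 + α) *
    ((((1 + v) ^ α - 1) * (1 + v) + α * v * (1 + v) ^ α) * (1 + (1 + α) * v) - 2 * α * v) /
    (2 * (1 + v) * (1 + (1 + α) * v))
  have hderiv : ∀ v : ℝ, 0 ≤ v → HasDerivAt G (G' v) v := by
    intro v hv
    have h1 : (0:ℝ) < 1 + v := by linarith
    have h2 : (0:ℝ) < 1 + (1 + α) * v := by nlinarith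
    have hL1 : HasDerivAt (fun y : ℝ => 1 + (1 + α) * y) (1 + α) v := by
      simpa using ((hasDerivAt_id v).const_mul (1 + α)).const_add 1
    have hL2 : HasDerivAt (fun y : ℝ => 1 + y) 1 v := (hasDerivAt_id' v).const_add 1
    have hpow : HasDerivAt (fun y : ℝ => y * ((1 + y) ^ α - 1))
        (1 * ((1 + v) ^ α - 1) + v * (1 * α * (1 + v) ^ (α - 1))) v :=
      (hasDerivAt_id' v).mul ((hL2.rpow_const (Or.inl h1.ne')).sub_const 1)
    refine (((hL1.log h2.ne').add (hpow.const_mul ((1 + α) / 2))).sub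
      ((hL2.log h1.ne').const_mul (1 + α))).congr_deriv ?_
    simp only [G', rpow_sub_one h1.ne']
    field_simp
    ring
  have hnonneg : ∀ v : ℝ, 0 < v → 0 ≤ G' v := by
    intro v hv
    have h2 : (1:ℝ) ≤ 1 + (1 + α) * v := by nlinarith
    have hconc := mul_mul_rpow_le_rpow_sub_one_mul hα0 hα1 (by linarith : -1 < v)
    have hw : 1 ≤ (1 + v) ^ α := one_le_rpow (by linarith) hα0
    have hαv : 0 ≤ α * v := by positivity
    have hnum : 2 * α * v ≤
        (((1 + v) ^ α - 1) * (1 + v) + α * v * (1 + v) ^ α) * (1 + (1 + α) * v) := by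
      nlinarith [mul_le_mul_of_nonneg_left hw hαv]
    exact div_nonneg (mul_nonneg (by linarith) (by linarith)) (by positivity)
  have hmono : MonotoneOn G (Ici 0) :=
    monotoneOn_of_hasDerivWithinAt_nonneg (convex_Ici 0)
      (fun v hv => (hderiv v hv).continuousAt.continuousWithinAt)
      (fun v hv => (hderiv v (by rw [interior_Ici] at hv; exact hv.le)).hasDerivWithinAt)
      (fun v hv => hnonneg v (by rwa [interior_Ici] at hv))
  have := hmono self_mem_Ici hu hu
  simp only [G] at this
  norm_num at this
  linarith

theorem rpow_half_sub_log_half (α : ℝ) : (1 / 2 : ℝ) ^ α - log (1 / 2) = log 2 + 2 ^ (-α) := by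
  rw [one_div, inv_rpow zero_le_two, ← rpow_neg zero_le_two, log_inv]
  ring

theorem log_two_mul_add_le_rpow {α t : ℝ} (hα : α ≤ 1) (ht0 : 0 < t) (ht : t ≤ 1 / 2) :
    log (2 * t) + 2 ^ (-α) ≤ t ^ α := by
  have := antitoneOn_rpow_sub_log hα ⟨ht0, ht.trans (by norm_num)⟩ ⟨by norm_num, by norm_num⟩ ht
  dsimp only at this
  rw [rpow_half_sub_log_half] at this
  rw [log_mul two_ne_zero ht0.ne']
  linarith

theorem rpow_le_log_two_mul_add {α t : ℝ} (hα : α ≤ 1) (ht : 1 / 2 ≤ t) (ht1 : t ≤ 1) :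
    t ^ α ≤ log (2 * t) + 2 ^ (-α) := by
  have := antitoneOn_rpow_sub_log hα ⟨by norm_num, by norm_num⟩ ⟨by linarith, ht1⟩ ht
  dsimp only at this
  rw [rpow_half_sub_log_half] at this
  rw [log_mul two_ne_zero (by linarith)]
  linarith

noncomputable def potential (α t : ℝ) : ℝ := max (t ^ α) (log (2 * t) + 2 ^ (-α))

noncomputable def lyapunov (α t : ℝ) : ℝ := exp ((1 + α) * (log t - potential α t))

section Lyapunov

variable {α : ℝ}

theorem potential_eq_rpow (hα : α ≤ 1) {t : ℝ} (ht0 : 0 < t) (ht : t ≤ 1 / 2) :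
    potential α t = t ^ α :=
  max_eq_left (log_two_mul_add_le_rpow hα ht0 ht)

theorem potential_eq_log (hα : α ≤ 1) {t : ℝ} (ht : 1 / 2 ≤ t) (ht1 : t ≤ 1) :
    potential α t = log (2 * t) + 2 ^ (-α) :=
  max_eq_right (rpow_le_log_two_mul_add hα ht ht1)

theorem potential_nonneg {t : ℝ} (ht : 0 ≤ t) : 0 ≤ potential α t :=
  (rpow_nonneg ht α).trans (le_max_left _ _)

theorem potential_le_two (hα0 : 0 ≤ α) {t : ℝ} (ht0 : 0 < t) (ht1 : t ≤ 1) :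
    potential α t ≤ 2 := by
  have hlog : log (2 * t) ≤ 1 :=
    (log_le_log (by positivity) (by linarith)).trans (log_two_lt_d9.le.trans (by norm_num))
  have h2 : (2 : ℝ) ^ (-α) ≤ 1 := rpow_le_one_of_one_le_of_nonpos one_le_two (by linarith)
  exact max_le ((rpow_le_one ht0.le ht1 hα0).trans one_le_two) (by linarith)

theorem lyapunov_nonneg (t : ℝ) : 0 ≤ lyapunov α t := (exp_pos _).le

theorem lyapunov_le_rpow (hα0 : 0 ≤ α) {t : ℝ} (ht : 0 < t) : lyapunov α t ≤ t ^ (1 + α) := by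
  rw [rpow_def_of_pos ht, lyapunov, exp_le_exp, mul_comm (log t)]
  nlinarith [potential_nonneg (α := α) ht.le]

theorem exp_neg_four_mul_rpow_le_lyapunov (hα0 : 0 ≤ α) (hα1 : α ≤ 1) {t : ℝ} (ht0 : 0 < t)
    (ht1 : t ≤ 1) : exp (-4) * t ^ (1 + α) ≤ lyapunov α t := by
  rw [rpow_def_of_pos ht0, lyapunov, ← exp_add, exp_le_exp, mul_comm (log t)]
  nlinarith [potential_le_two hα0 ht0 ht1, potential_nonneg (α := α) ht0.le]

theorem lyapunov_le_of_half_le (hα0 : 0 ≤ α) (hα1 : α ≤ 1) {x y : ℝ} (hy : 0 < y)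
    (hx : 1 / 2 ≤ x) (hx1 : x ≤ 1) : lyapunov α y ≤ lyapunov α x := by
  rw [lyapunov, lyapunov, exp_le_exp, potential_eq_log hα1 hx hx1,
    log_mul two_ne_zero (by linarith)]
  have : log (2 * y) + 2 ^ (-α) ≤ potential α y := le_max_right _ _
  rw [log_mul two_ne_zero hy.ne'] at this
  nlinarith

theorem lyapunov_mul_one_add_le (hα0 : 0 ≤ α) (hα1 : α ≤ 1) {x : ℝ} (hx0 : 0 < x)
    (hx : x ≤ 1 / 2) :
    lyapunov α (x * (1 + (2 * x) ^ α)) ≤ (1 + (1 + α) * (2 * x) ^ α) * lyapunov α x := by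
  set u := (2 * x) ^ α
  have hu : 0 ≤ u := by positivity
  have hpow : 1 ≤ (1 + u) ^ α := one_le_rpow (by linarith) hα0
  have hu_le : u ≤ 2 * x ^ α := by
    rw [show u = 2 ^ α * x ^ α from mul_rpow zero_le_two hx0.le]
    exact mul_le_mul_of_nonneg_right (rpow_le_self_of_one_le one_le_two hα1) (by positivity)
  have hgain : (1 + α) / 2 * (u * ((1 + u) ^ α - 1)) ≤ (1 + α) * (x ^ α * ((1 + u) ^ α - 1)) := by
    have := mul_le_mul_of_nonneg_right hu_le (sub_nonneg.2 hpow)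
    nlinarith
  have hpot : (x * (1 + u)) ^ α ≤ potential α (x * (1 + u)) := le_max_left _ _
  rw [mul_rpow hx0.le (by positivity)] at hpot
  rw [lyapunov, lyapunov, ← exp_log (by positivity : 0 < 1 + (1 + α) * u), ← exp_add,
    exp_le_exp, log_mul hx0.ne' (by positivity), potential_eq_rpow hα1 hx0 hx]
  nlinarith [one_add_mul_log_one_add_le hα0 hα1 hu]

end Lyapunov

theorem hasDerivAt_iterate_of_forall {𝕜 : Type*} [NontriviallyNormedField 𝕜] {f f' : 𝕜 → 𝕜}
    {x : 𝕜} {n : ℕ} (h : ∀ i < n, HasDerivAt f (f' (f^[i] x)) (f^[i] x)) :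
    HasDerivAt f^[n] (∏ i ∈ Finset.range n, f' (f^[i] x)) x := by
  induction n with
  | zero => simpa using hasDerivAt_id x
  | succ n ih =>
    rw [Finset.prod_range_succ, mul_comm, Function.iterate_succ']
    exact (h n n.lt_succ_self).comp x (ih fun i hi => h i (hi.trans n.lt_succ_self))

theorem iterate_le_prod_mul_of_le_mul {X : Type*} {f : X → X} {g F : X → ℝ} {x : X} {n : ℕ}
    (hg : ∀ i < n, 0 ≤ g (f^[i] x)) (h : ∀ i < n, F (f (f^[i] x)) ≤ g (f^[i] x) * F (f^[i] x)) :
    F (f^[n] x) ≤ (∏ i ∈ Finset.range n, g (f^[i] x)) * F x := by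
  induction n with
  | zero => simp
  | succ n ih =>
    rw [Finset.prod_range_succ, Function.iterate_succ_apply']
    calc F (f (f^[n] x)) ≤ g (f^[n] x) * F (f^[n] x) := h n n.lt_succ_self
      _ ≤ g (f^[n] x) * ((∏ i ∈ Finset.range n, g (f^[i] x)) * F x) :=
        mul_le_mul_of_nonneg_left (ih (fun i hi => hg i (hi.trans n.lt_succ_self))
          fun i hi => h i (hi.trans n.lt_succ_self)) (hg n n.lt_succ_self)
      _ = _ := by ring

theorem abs_le_abs_of_hasDerivAt_comp {f g : ℝ → ℝ} {a b z : ℝ} (hf : HasDerivAt f a z)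
    (hgf : HasDerivAt (g ∘ f) b z) (hg : ∀ᶠ y in 𝓝 (f z), |y - f z| ≤ |g y - g (f z)|) :
    |a| ≤ |b| := by
  have hslope_f := (hasDerivAt_iff_tendsto_slope.mp hf).abs
  have hslope_gf := (hasDerivAt_iff_tendsto_slope.mp hgf).abs
  refine le_of_tendsto_of_tendsto hslope_f hslope_gf ?_
  filter_upwards [nhdsWithin_le_nhds (hf.continuousAt.eventually hg)] with t ht
  simp only [slope_def_field, abs_div, Function.comp_apply]
  exact div_le_div_of_nonneg_right ht (abs_nonneg _)

theorem Set.BijOn.eq_endpoints_of_continuousOn {f : ℝ → ℝ} {a b c d : ℝ} (hab : a ≤ b)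
    (hf : ContinuousOn f (Icc a b)) (hbij : BijOn f (Icc a b) (Icc c d)) :
    (f a = c ∧ f b = d) ∨ (f a = d ∧ f b = c) := by
  have ha : a ∈ Icc a b := left_mem_Icc.2 hab
  have hb : b ∈ Icc a b := right_mem_Icc.2 hab
  have hcd : c ≤ d := (hbij.mapsTo ha).1.trans (hbij.mapsTo ha).2
  obtain ⟨p, hp, hpc⟩ := hbij.surjOn (left_mem_Icc.2 hcd)
  obtain ⟨q, hq, hqd⟩ := hbij.surjOn (right_mem_Icc.2 hcd)
  have hfa := hbij.mapsTo ha
  have hfb := hbij.mapsTo hb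
  rcases hf.strictMonoOn_of_injOn_Icc' hab hbij.injOn with hmono | hanti
  · have h1 := hmono.monotoneOn ha hp hp.1
    have h2 := hmono.monotoneOn hq hb hq.2
    exact Or.inl ⟨by linarith [hfa.1], by linarith [hfb.2]⟩
  · have h1 := hanti.antitoneOn ha hq hq.1
    have h2 := hanti.antitoneOn hp hb hp.2
    exact Or.inr ⟨by linarith [hfa.2], by linarith [hfb.1]⟩

theorem iterate_mem_Ioc_of_pos {T : ℝ → ℝ} (hT_maps : MapsTo T (Icc 0 1) (Icc 0 1))
    (hT0 : T 0 = 0) {z : ℝ} (hz : z ∈ Icc 0 1) {m : ℕ} (hpos : 0 < T^[m] z) {i : ℕ}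
    (hi : i ≤ m) : T^[i] z ∈ Ioc 0 1 := by
  have hmem := hT_maps.iterate i hz
  refine ⟨hmem.1.lt_of_ne fun h0 => hpos.ne' ?_, hmem.2⟩
  rw [← Nat.sub_add_cancel hi, Function.iterate_add_apply, ← h0, Function.iterate_fixed hT0]

section IntermittentMap

variable {α : ℝ} {T T' : ℝ → ℝ}

theorem add_two_rpow_mul_rpow_eq (hα : 0 ≤ α) {x : ℝ} (hx : 0 ≤ x) :
    x + (2 : ℝ) ^ α * x ^ (1 + α) = x * (1 + (2 * x) ^ α) := by
  rw [rpow_one_add' hx (by linarith), mul_rpow zero_le_two hx]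
  ring

theorem hasDerivAt_add_two_rpow_mul_rpow {x : ℝ} (hx : 0 < x) :
    HasDerivAt (fun y => y + (2 : ℝ) ^ α * y ^ (1 + α)) (1 + (1 + α) * (2 * x) ^ α) x := by
  refine ((hasDerivAt_id' x).add
    ((hasDerivAt_rpow_const (Or.inl hx.ne')).const_mul _)).congr_deriv ?_
  rw [add_sub_cancel_left, mul_rpow zero_le_two hx.le]
  ring

theorem lyapunov_map_le (hα0 : 0 ≤ α) (hα1 : α ≤ 1)
    (hT_formula : ∀ x ∈ Ico (0:ℝ) (1/2), T x = x + (2:ℝ) ^ α * x ^ (1 + α))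
    (hT_deriv : ∀ x ∈ Icc (0:ℝ) 1, x ≠ 1/2 → HasDerivAt T (T' x) x)
    (hT_expanding : ∀ x ∈ Icc (1/2:ℝ) 1, 1 < |T' x|)
    {x : ℝ} (hx : x ∈ Ioc 0 1) (hx_half : x ≠ 1 / 2) (hTx : 0 < T x) :
    lyapunov α (T x) ≤ |T' x| * lyapunov α x := by
  rcases hx_half.lt_or_gt with hlt | hgt
  · have hnear : T =ᶠ[𝓝 x] fun y => y + (2 : ℝ) ^ α * y ^ (1 + α) :=
      eventually_of_mem (Ioo_mem_nhds hx.1 hlt) fun y hy => hT_formula y ⟨hy.1.le, hy.2⟩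
    have hT'x : T' x = 1 + (1 + α) * (2 * x) ^ α :=
      (hT_deriv x (Ioc_subset_Icc_self hx) hx_half).unique
        ((hasDerivAt_add_two_rpow_mul_rpow hx.1).congr_of_eventuallyEq hnear)
    have hx0 := hx.1
    rw [hT_formula x ⟨hx0.le, hlt⟩, add_two_rpow_mul_rpow_eq hα0 hx0.le, hT'x,
      abs_of_pos (by positivity)]
    exact lyapunov_mul_one_add_le hα0 hα1 hx0 hlt.le
  · calc lyapunov α (T x) ≤ lyapunov α x := lyapunov_le_of_half_le hα0 hα1 hTx hgt.le hx.2
      _ ≤ |T' x| * lyapunov α x :=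
        le_mul_of_one_le_left (lyapunov_nonneg x) (hT_expanding x ⟨hgt.le, hx.2⟩).le

theorem hasDerivAt_iterate_and_lyapunov_iterate_le (hα0 : 0 ≤ α) (hα1 : α ≤ 1)
    (hT_formula : ∀ x ∈ Ico (0:ℝ) (1/2), T x = x + (2:ℝ) ^ α * x ^ (1 + α))
    (hT_deriv : ∀ x ∈ Icc (0:ℝ) 1, x ≠ 1/2 → HasDerivAt T (T' x) x)
    (hT_expanding : ∀ x ∈ Icc (1/2:ℝ) 1, 1 < |T' x|) {z : ℝ} {k : ℕ}
    (horbit : ∀ i ≤ k, T^[i] z ∈ Ioc 0 1) (hk : ∀ i < k, T^[i] z ≠ 1 / 2) :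
    HasDerivAt T^[k] (∏ i ∈ Finset.range k, T' (T^[i] z)) z ∧
      lyapunov α (T^[k] z) ≤ |∏ i ∈ Finset.range k, T' (T^[i] z)| * lyapunov α z := by
  refine ⟨hasDerivAt_iterate_of_forall fun i hi =>
    hT_deriv _ (Ioc_subset_Icc_self (horbit i hi.le)) (hk i hi), ?_⟩
  rw [Finset.abs_prod]
  refine iterate_le_prod_mul_of_le_mul (g := fun x => |T' x|) (fun i _ => abs_nonneg _) fun i hi =>
    lyapunov_map_le hα0 hα1 hT_formula hT_deriv hT_expanding (horbit i hi.le) (hk i hi) ?_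
  rw [← Function.iterate_succ_apply' T i z]
  exact (horbit (i + 1) hi).1

theorem abs_sub_half_le_abs_map_sub (hα0 : 0 ≤ α)
    (hT_formula : ∀ x ∈ Ico (0:ℝ) (1/2), T x = x + (2:ℝ) ^ α * x ^ (1 + α))
    (hT_deriv : ∀ x ∈ Icc (0:ℝ) 1, x ≠ 1/2 → HasDerivAt T (T' x) x)
    (hT_cont : ContinuousOn T (Icc (1/2:ℝ) 1))
    (hT_expanding : ∀ x ∈ Icc (1/2:ℝ) 1, 1 < |T' x|) (hT_half : T (1 / 2) = 1)
    {y : ℝ} (hy : y ∈ Icc 0 1) : |y - 1 / 2| ≤ |T y - T (1 / 2)| := by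
  rcases lt_trichotomy y (1 / 2) with hlt | rfl | hgt
  · have hgrowth : y * (2 * y) ^ α ≤ y :=
      mul_le_of_le_one_right hy.1 (rpow_le_one (by linarith [hy.1]) (by linarith) hα0)
    have hTy : T y = y + y * (2 * y) ^ α := by
      rw [hT_formula y ⟨hy.1, hlt⟩, add_two_rpow_mul_rpow_eq hα0 hy.1]; ring
    rw [hT_half, abs_of_neg (by linarith), abs_of_neg (by linarith)]
    linarith
  · simp
  · obtain ⟨c, hc, hslope⟩ := exists_hasDerivAt_eq_slope T T' hgt
      (hT_cont.mono (Icc_subset_Icc le_rfl hy.2))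
      fun c hc => hT_deriv c ⟨by linarith [hc.1], by linarith [hc.2, hy.2]⟩ hc.1.ne'
    rw [eq_div_iff (by linarith)] at hslope
    rw [← hslope, abs_mul]
    exact le_mul_of_one_le_left (abs_nonneg _) (hT_expanding c ⟨hc.1.le, hc.2.le.trans hy.2⟩).le

theorem eq_add_one_and_map_half_eq_one_of_iterate_eq_half
    (hT_cont : ContinuousOn T (Icc (1/2:ℝ) 1)) (hT_bij : BijOn T (Icc (1/2:ℝ) 1) (Icc (0:ℝ) 1))
    {z : ℝ} {k m : ℕ} (horbit : ∀ i ≤ m, T^[i] z ∈ Ioc 0 1) (hkm : k < m)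
    (hk : T^[k] z = 1 / 2) : m = k + 1 ∧ T (1 / 2) = 1 := by
  have hsucc : ∀ j, T^[j + 1] z = T (T^[j] z) := fun j => Function.iterate_succ_apply' T j z
  rcases hT_bij.eq_endpoints_of_continuousOn (by norm_num) hT_cont with ⟨h0, -⟩ | ⟨h1, hT1⟩
  · have := (horbit (k + 1) hkm).1
    rw [hsucc, hk, h0] at this
    exact (lt_irrefl 0 this).elim
  refine ⟨?_, h1⟩
  by_contra hne
  have := (horbit (k + 2) (by omega)).1
  rw [hsucc, hsucc, hk, h1, hT1] at this
  exact lt_irrefl 0 this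

theorem lyapunov_iterate_le (hα0 : 0 ≤ α) (hα1 : α ≤ 1)
    (hT_maps : MapsTo T (Icc (0:ℝ) 1) (Icc (0:ℝ) 1))
    (hT_formula : ∀ x ∈ Ico (0:ℝ) (1/2), T x = x + (2:ℝ) ^ α * x ^ (1 + α))
    (hT_deriv : ∀ x ∈ Icc (0:ℝ) 1, x ≠ 1/2 → HasDerivAt T (T' x) x)
    (hT_cont : ContinuousOn T (Icc (1/2:ℝ) 1))
    (hT_bij : BijOn T (Icc (1/2:ℝ) 1) (Icc (0:ℝ) 1))
    (hT_expanding : ∀ x ∈ Icc (1/2:ℝ) 1, 1 < |T' x|) {m : ℕ} {z Dm : ℝ} (hz : z ∈ Ioc 0 1)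
    (hD : HasDerivAt T^[m] Dm z) (hpos : 0 < T^[m] z) :
    lyapunov α (T^[m] z) ≤ |Dm| * lyapunov α z := by
  classical
  have hT0 : T 0 = 0 := by
    simpa [zero_rpow (by linarith : 1 + α ≠ 0)] using hT_formula 0 ⟨le_rfl, by norm_num⟩
  have horbit : ∀ i ≤ m, T^[i] z ∈ Ioc 0 1 := fun i hi =>
    iterate_mem_Ioc_of_pos hT_maps hT0 (Ioc_subset_Icc_self hz) hpos hi
  by_cases hhit : ∃ k < m, T^[k] z = 1 / 2
  swap
  · push Not at hhit
    obtain ⟨hDm, hle⟩ := hasDerivAt_iterate_and_lyapunov_iterate_le hα0 hα1 hT_formula hT_deriv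
      hT_expanding horbit hhit
    rwa [hD.unique hDm]
  obtain ⟨hkm, hk_half⟩ := Nat.find_spec hhit
  set k := Nat.find hhit
  obtain ⟨hDk, hle⟩ := hasDerivAt_iterate_and_lyapunov_iterate_le hα0 hα1 hT_formula hT_deriv
    hT_expanding (fun i hi => horbit i (hi.trans hkm.le))
    fun i hi h => Nat.find_min hhit hi ⟨hi.trans hkm, h⟩
  obtain ⟨hm, h1⟩ :=
    eq_add_one_and_map_half_eq_one_of_iterate_eq_half hT_cont hT_bij horbit hkm hk_half
  rw [hm, Function.iterate_succ'] at hD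
  rw [hm]
  have hDk_le : |∏ i ∈ Finset.range k, T' (T^[i] z)| ≤ |Dm| := by
    refine abs_le_abs_of_hasDerivAt_comp hDk hD ?_
    rw [hk_half]
    filter_upwards [Icc_mem_nhds (by norm_num : (0:ℝ) < 1 / 2) (by norm_num : (1 / 2 : ℝ) < 1)]
      with y hy using abs_sub_half_le_abs_map_sub hα0 hT_formula hT_deriv hT_cont hT_expanding h1 hy
  calc lyapunov α (T^[k + 1] z) = lyapunov α 1 := by rw [Function.iterate_succ_apply', hk_half, h1]
    _ ≤ lyapunov α (1 / 2) := lyapunov_le_of_half_le hα0 hα1 one_pos le_rfl (by norm_num)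
    _ = lyapunov α (T^[k] z) := by rw [hk_half]
    _ ≤ _ := hle
    _ ≤ |Dm| * lyapunov α z := mul_le_mul_of_nonneg_right hDk_le (lyapunov_nonneg z)

end IntermittentMap

theorem iterate_derivative_lower_bound_intermittent_map_general
    (α : ℝ) (hα0 : 0 < α) (hα1 : α < 1)
    (T : ℝ → ℝ) (hT_maps : MapsTo T (Icc (0:ℝ) 1) (Icc (0:ℝ) 1))
    (hT_formula : ∀ x ∈ Ico (0:ℝ) (1/2), T x = x + (2:ℝ) ^ α * x ^ (1 + α))
    (T' : ℝ → ℝ)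
    (hT_deriv : ∀ x ∈ Icc (0:ℝ) 1, x ≠ 1/2 → HasDerivAt T (T' x) x)
    (hT_C2 : ContDiffOn ℝ 2 T (Icc (1/2:ℝ) 1))
    (hT_bij : BijOn T (Icc (1/2:ℝ) 1) (Icc (0:ℝ) 1))
    (hT_expanding : ∀ x ∈ Icc (1/2:ℝ) 1, 1 < |T' x|) :
    ∃ C₀ > (0:ℝ), ∀ m : ℕ, 1 ≤ m → ∀ z ∈ Ioc (0:ℝ) 1, ∀ Dm : ℝ,
      HasDerivAt (T^[m]) Dm z →
      C₀ * (T^[m] z / z) ^ (1 + α) ≤ |Dm| := by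
  refine ⟨exp (-4), exp_pos _, fun m _ z hz Dm hD => ?_⟩
  have hTmz := hT_maps.iterate m (Ioc_subset_Icc_self hz)
  rcases hTmz.1.eq_or_lt with h0 | hpos
  · rw [← h0, zero_div, zero_rpow (by linarith), mul_zero]
    exact abs_nonneg _
  rw [div_rpow hpos.le hz.1.le, ← mul_div_assoc, div_le_iff₀ (rpow_pos_of_pos hz.1 _)]
  calc exp (-4) * (T^[m] z) ^ (1 + α) ≤ lyapunov α (T^[m] z) :=
        exp_neg_four_mul_rpow_le_lyapunov hα0.le hα1.le hpos hTmz.2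
    _ ≤ |Dm| * lyapunov α z :=
        lyapunov_iterate_le hα0.le hα1.le hT_maps hT_formula hT_deriv hT_C2.continuousOn hT_bij
          hT_expanding hz hD hpos
    _ ≤ |Dm| * z ^ (1 + α) :=
        mul_le_mul_of_nonneg_left (lyapunov_le_rpow hα0.le hz.1) (abs_nonneg _)

/-- **Derivative lower bound** (inequality (BSD)): there is `C₀ > 0`,
independent of `m` and `z`, such that for every `m ≥ 1` and every
`z ∈ (0,1]` at which `T^m` is differentiable,
`|(T^m)'(z)| ≥ C₀ (T^m z / z)^{1+α}`. -/
theorem iterate_derivative_lower_bound_intermittent_map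
    (α : ℝ) (hα0 : 0 < α) (hα1 : α < 1)
    (T : ℝ → ℝ) (hT_maps : MapsTo T (Icc (0:ℝ) 1) (Icc (0:ℝ) 1))
    (hT_formula : ∀ x ∈ Ico (0:ℝ) (1/2), T x = x + (2:ℝ) ^ α * x ^ (1 + α))
    (T' : ℝ → ℝ)
    (hT_deriv : ∀ x ∈ Icc (0:ℝ) 1, x ≠ 1/2 → HasDerivAt T (T' x) x)
    (hT_C2 : ContDiffOn ℝ 2 T (Icc (1/2:ℝ) 1))
    (hT_bij : BijOn T (Icc (1/2:ℝ) 1) (Icc (0:ℝ) 1))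
    (hT_expanding : ∀ x ∈ Icc (1/2:ℝ) 1, 1 < |T' x|)
    -- Markov partition points x_ℓ and atoms I_ℓ = (x_{ℓ+1}, x_ℓ]
    (xpt : ℕ → ℝ) (hx0 : xpt 0 = 1) (hx1 : xpt 1 = 1/2)
    (hxpos : ∀ ℓ, 0 < xpt ℓ) (hxdec : ∀ ℓ, xpt (ℓ + 1) < xpt ℓ)
    (hxpre : ∀ ℓ, 2 ≤ ℓ → xpt ℓ ∈ Ioo (0:ℝ) (1/2) ∧ T (xpt ℓ) = xpt (ℓ - 1)) :
    ∃ C₀ > (0:ℝ), ∀ m : ℕ, 1 ≤ m → ∀ z ∈ Ioc (0:ℝ) 1, ∀ Dm : ℝ,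
      HasDerivAt (T^[m]) Dm z →
      C₀ * (T^[m] z / z) ^ (1 + α) ≤ |Dm| :=
  iterate_derivative_lower_bound_intermittent_map_general α hα0 hα1 T hT_maps hT_formula T' hT_deriv
    hT_C2 hT_bij hT_expanding
end
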